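/- arXiv:2511.13416 — 6 statements merged into one kernel-verified Lean document; each statement's English description precedes it below -/
import Mathlib

section
/- Let (x_n)_{n≥1} be a sequence of positive real numbers satisfying MacMahon-type asymptotics with parameters c ∈ ℝ and C₀ ≥ 0. Then there exists a constant C < ∞, depending only on c and C₀, such that for every η > 0 and every function f : [0,∞) → ℝ that is integrable on [0,∞), differentiable, and whose derivative f′ is continuous and integrable on [0,∞), the series ∑_{n≥1} f(x_n/√η) converges absolutely and | (1/√η) ∑_{n≥1} f(x_n/√η) − (1/π) ∫_0^∞ f(u) du | ≤ C (∫_0^∞ |f′(u)| du) / √η. -/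
open MeasureTheory Real Set

/-! Cut `(0, ∞)` into the cells `(n h, (n + 1) h]` with `h = π / √η`. The MacMahon bound puts the
node `x_{n+1} / √η` within `δ = (|c| + |C₀|) / √η` of the right end of the `n`-th cell, so by the
fundamental theorem of calculus `h f(x_{n+1} / √η)` differs from the integral of `f` over the cell
by at most `h` times the integral of `|f'|` over the cell enlarged by `δ` on both sides. The
enlarged cells cover each point at most `⌊1 + 2δ / h⌋ + 1` times, a number independent of `η`, so
summing over `n` costs a factor `h` times that multiplicity times `∫ |f'|`. -/

lemma abs_sub_le_integral_uIoc_abs_deriv {f : ℝ → ℝ} {a b : ℝ}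
    (hdf : ∀ x ∈ uIcc a b, DifferentiableAt ℝ f x)
    (hint : IntervalIntegrable (deriv f) volume a b) :
    |f b - f a| ≤ ∫ u in uIoc a b, |deriv f u| := by
  rw [← intervalIntegral.integral_deriv_eq_sub hdf hint]
  simpa only [Real.norm_eq_abs] using
    intervalIntegral.norm_integral_le_integral_norm_uIoc (f := deriv f) (μ := volume)

lemma abs_mul_sub_setIntegral_Ioc_le {f : ℝ → ℝ} {a b t : ℝ} (hab : a ≤ b)
    (hdf : Differentiable ℝ f) (hdi : IntegrableOn (deriv f) (Icc (min a t) (max b t))) :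
    |(b - a) * f t - ∫ u in Ioc a b, f u|
      ≤ (b - a) * ∫ u in Icc (min a t) (max b t), |deriv f u| := by
  set K := Icc (min a t) (max b t)
  have hvol : volume.real (Ioc a b) = b - a := by simp [hab]
  have hfin : volume (Ioc a b) < ⊤ := measure_Ioc_lt_top
  have hfint : IntegrableOn f (Ioc a b) :=
    (hdf.continuous.integrableOn_Icc (a := a) (b := b)).mono_set Ioc_subset_Icc_self
  have hpoint : ∀ u ∈ Ioc a b, ‖f t - f u‖ ≤ ∫ v in K, |deriv f v| := by
    intro u hu
    have huK : uIcc u t ⊆ K := Icc_subset_Icc (le_min ((min_le_left _ _).trans hu.1.le)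
      (min_le_right _ _)) (max_le (le_max_of_le_left hu.2) (le_max_right _ _))
    calc ‖f t - f u‖ ≤ ∫ v in uIoc u t, |deriv f v| :=
          abs_sub_le_integral_uIoc_abs_deriv (fun x _ => hdf x)
            ((hdi.mono_set huK).intervalIntegrable)
      _ ≤ ∫ v in K, |deriv f v| :=
          setIntegral_mono_set hdi.abs (.of_forall fun _ => abs_nonneg _)
            (uIoc_subset_uIcc.trans huK).eventuallyLE
  have hsplit : (b - a) * f t - ∫ u in Ioc a b, f u = ∫ u in Ioc a b, (f t - f u) := by
    rw [integral_sub (integrableOn_const (C := f t) hfin.ne) hfint, setIntegral_const, hvol,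
      smul_eq_mul]
  rw [hsplit, mul_comm, ← hvol]
  exact norm_setIntegral_le_of_norm_le_const hfin hpoint

open Finset in
lemma Finset.card_le_add_one_of_le_add {S : Finset ℕ} {d : ℕ}
    (hS : ∀ m ∈ S, ∀ n ∈ S, m ≤ n + d) : #S ≤ d + 1 := by
  rcases S.eq_empty_or_nonempty with rfl | hne
  · simp
  · calc #S ≤ #(Icc (S.min' hne) (S.min' hne + d)) :=
          card_le_card fun m hm => mem_Icc.2 ⟨S.min'_le m hm, hS m hm _ (S.min'_mem hne)⟩
      _ = d + 1 := by simp; omega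

open Finset in
lemma card_filter_mem_Icc_mul_le {h : ℝ} (hh : 0 < h) (δ u : ℝ) (s : Finset ℕ) :
    #{n ∈ s | u ∈ Icc (((n : ℕ) : ℝ) * h - δ) ((n + 1) * h + δ)} ≤ ⌊1 + 2 * δ / h⌋₊ + 1 := by
  refine Finset.card_le_add_one_of_le_add fun m hm n hn => ?_
  obtain ⟨-, hm, -⟩ := mem_filter.1 hm
  obtain ⟨-, -, hn⟩ := mem_filter.1 hn
  have hmn : (m : ℝ) ≤ n + (1 + 2 * δ / h) := by
    rw [mul_div_assoc, ← sub_nonneg]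
    have : 0 ≤ ((n + 1) * h + δ - (m * h - δ)) / h := div_nonneg (by linarith) hh.le
    convert this using 1
    field_simp
    ring
  have : (m : ℝ) < n + ⌊1 + 2 * δ / h⌋₊ + 1 := by
    linarith [Nat.lt_floor_add_one (1 + 2 * δ / h)]
  exact Nat.lt_add_one_iff.1 (by exact_mod_cast this)

open Finset in
lemma sum_setIntegral_le_mul_integral_of_card_filter_le {α ι : Type*} [MeasurableSpace α]
    {μ : Measure α} (s : Finset ι) {J : ι → Set α} (hJ : ∀ i, MeasurableSet (J i)) {g : α → ℝ}
    [∀ u, DecidablePred (u ∈ J ·)]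
    (hg : 0 ≤ g) (hgi : Integrable g μ) {M : ℕ} (hM : ∀ u, #{i ∈ s | u ∈ J i} ≤ M) :
    ∑ i ∈ s, ∫ u in J i, g u ∂μ ≤ M * ∫ u, g u ∂μ := by
  have hind : ∀ i ∈ s, Integrable ((J i).indicator g) μ := fun i _ => hgi.indicator (hJ i)
  have hpoint : ∀ u, ∑ i ∈ s, (J i).indicator g u ≤ M * g u := fun u => calc
    ∑ i ∈ s, (J i).indicator g u = #{i ∈ s | u ∈ J i} * g u := by
      simp only [indicator_apply, ← sum_filter, sum_const, nsmul_eq_mul]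
    _ ≤ M * g u := mul_le_mul_of_nonneg_right (by exact_mod_cast hM u) (hg u)
  calc ∑ i ∈ s, ∫ u in J i, g u ∂μ = ∫ u, ∑ i ∈ s, (J i).indicator g u ∂μ := by
        rw [integral_finsetSum s hind]
        exact sum_congr rfl fun i _ => (integral_indicator (hJ i)).symm
    _ ≤ ∫ u, M * g u ∂μ := integral_mono (integrable_finsetSum s hind) (hgi.const_mul _) hpoint
    _ = M * ∫ u, g u ∂μ := integral_const_mul _ _

lemma hasSum_setIntegral_Ioc_mul {f : ℝ → ℝ} {h : ℝ} (hh : 0 < h)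
    (hf : IntegrableOn f (Ioi 0)) :
    HasSum (fun n : ℕ => ∫ u in Ioc (n * h) ((n + 1) * h), f u) (∫ u in Ioi 0, f u) := by
  have hmono : Monotone fun n : ℕ => (n : ℝ) * h := fun m n hmn => by dsimp only; gcongr
  have hunion : ⋃ n : ℕ, Ioc ((n : ℝ) * h) ((n + 1) * h) = Ioi 0 := by
    have := iUnion_Ioc_map_succ_eq_Ioi (f := fun n : ℕ => (n : ℝ) * h)
      (fun n => hmono (Nat.zero_le n)) (not_bddAbove_iff.2 fun y => ?_)
    · simpa using this
    obtain ⟨n, hn⟩ := exists_nat_gt (y / h)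
    exact ⟨n * h, ⟨n, rfl⟩, by rwa [div_lt_iff₀ hh] at hn⟩
  have hdisj := hmono.pairwise_disjoint_on_Ioc_succ
  simp only [Order.succ_eq_add_one, Nat.cast_add_one] at hdisj
  rw [← hunion] at hf ⊢
  exact hasSum_integral_iUnion (fun _ => measurableSet_Ioc) hdisj hf

section PerturbedRiemannSum

variable {f : ℝ → ℝ} {h δ : ℝ}

lemma abs_mul_sub_setIntegral_Ioc_mul_le (hdf : Differentiable ℝ f)
    (hdi : IntegrableOn (deriv f) (Ici 0)) (hh : 0 < h) (n : ℕ) {t : ℝ} (ht0 : 0 ≤ t)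
    (ht : |t - (n + 1) * h| ≤ δ) :
    |h * f t - ∫ u in Ioc (n * h) ((n + 1) * h), f u|
      ≤ h * ∫ u in Icc (n * h - δ) ((n + 1) * h + δ), |deriv f u| ∂volume.restrict (Ici 0) := by
  obtain ⟨htl, htr⟩ := abs_le.1 ht
  have hK : Icc (min (n * h) t) (max ((n + 1) * h) t)
      ⊆ Icc (n * h - δ) ((n + 1) * h + δ) ∩ Ici 0 := fun u hu =>
    ⟨⟨le_trans (le_min (by linarith) (by linarith)) hu.1,
      hu.2.trans (max_le (by linarith) (by linarith))⟩,
     le_trans (le_min (by positivity) ht0) hu.1⟩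
  have hlen : ((n : ℝ) + 1) * h - n * h = h := by ring
  have hcell := abs_mul_sub_setIntegral_Ioc_le (t := t) (by nlinarith) hdf
    (hdi.mono_set (hK.trans inter_subset_right))
  rw [hlen] at hcell
  refine hcell.trans (mul_le_mul_of_nonneg_left ?_ hh.le)
  rw [Measure.restrict_restrict measurableSet_Icc]
  exact setIntegral_mono_set (hdi.mono_set inter_subset_right).abs
    (.of_forall fun _ => abs_nonneg _) hK.eventuallyLE

lemma sum_range_setIntegral_Icc_abs_deriv_le (hdi : IntegrableOn (deriv f) (Ici 0))
    (hh : 0 < h) (N : ℕ) :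
    ∑ n ∈ Finset.range N,
        ∫ u in Icc (n * h - δ) ((n + 1) * h + δ), |deriv f u| ∂volume.restrict (Ici 0)
      ≤ (⌊1 + 2 * δ / h⌋₊ + 1) * ∫ u in Ici 0, |deriv f u| := by
  exact_mod_cast sum_setIntegral_le_mul_integral_of_card_filter_le (Finset.range N)
    (fun _ => measurableSet_Icc) (fun _ => abs_nonneg _) hdi.abs
    (card_filter_mem_Icc_mul_le hh δ · _)

theorem summable_abs_and_abs_mul_tsum_sub_integral_le (hf : IntegrableOn f (Ioi 0))
    (hdf : Differentiable ℝ f) (hdi : IntegrableOn (deriv f) (Ici 0)) (hh : 0 < h)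
    {t : ℕ → ℝ} (ht0 : ∀ n, 0 ≤ t n) (ht : ∀ n : ℕ, |t n - (n + 1) * h| ≤ δ) :
    Summable (fun n => |f (t n)|) ∧
      |h * ∑' n, f (t n) - ∫ u in Ioi 0, f u|
        ≤ h * ((⌊1 + 2 * δ / h⌋₊ + 1) * ∫ u in Ioi 0, |deriv f u|) := by
  set D : ℕ → ℝ := fun n : ℕ =>
    ∫ u in Icc (n * h - δ) ((n + 1) * h + δ), |deriv f u| ∂volume.restrict (Ici 0)
  set A : ℕ → ℝ := fun n : ℕ => ∫ u in Ioc (n * h) ((n + 1) * h), f u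
  have hcell (n : ℕ) : |h * f (t n) - A n| ≤ h * D n :=
    abs_mul_sub_setIntegral_Ioc_mul_le hdf hdi hh n (ht0 n) (ht n)
  have hD0 (n : ℕ) : 0 ≤ D n := integral_nonneg fun _ => abs_nonneg _
  have hDsum := sum_range_setIntegral_Icc_abs_deriv_le (δ := δ) hdi hh
  rw [integral_Ici_eq_integral_Ioi] at hDsum
  have hD : Summable D := summable_of_sum_range_le hD0 hDsum
  have hA := hasSum_setIntegral_Ioc_mul hh hf
  have hAabs := hasSum_setIntegral_Ioc_mul hh hf.abs
  have habs (n : ℕ) : h * |f (t n)| ≤ h * D n + ∫ u in Ioc (n * h) ((n + 1) * h), |f u| := by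
    have hAn : |A n| ≤ ∫ u in Ioc (n * h) ((n + 1) * h), |f u| := abs_integral_le_integral_abs
    have := abs_sub_abs_le_abs_sub (h * f (t n)) (A n)
    rw [abs_mul, abs_of_pos hh] at this
    linarith [hcell n]
  have hsum : Summable fun n => |f (t n)| := (summable_mul_left_iff hh.ne').1 <|
    (hD.mul_left h |>.add hAabs.summable).of_nonneg_of_le (fun n => by positivity) habs
  refine ⟨hsum, ?_⟩
  calc |h * ∑' n, f (t n) - ∫ u in Ioi 0, f u| = |∑' n, (h * f (t n) - A n)| := by
        rw [(hsum.of_abs.mul_left h).tsum_sub hA.summable, tsum_mul_left, hA.tsum_eq]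
    _ ≤ h * ∑' n, D n :=
        tsum_of_norm_bounded (f := fun n => h * f (t n) - A n) (hD.hasSum.mul_left h) hcell
    _ ≤ h * ((⌊1 + 2 * δ / h⌋₊ + 1) * ∫ u in Ioi 0, |deriv f u|) :=
        mul_le_mul_of_nonneg_left (Real.tsum_le_of_sum_range_le hD0 hDsum) hh.le

end PerturbedRiemannSum

lemma abs_sub_pi_mul_le_of_abs_sub_le {x : ℕ → ℝ} {c C₀ : ℝ}
    (hx : ∀ n : ℕ, 1 ≤ n → |x n - π * (n : ℝ) - c| ≤ C₀ / (n : ℝ)) {n : ℕ} (hn : 1 ≤ n) :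
    |x n - π * n| ≤ |c| + |C₀| := by
  have hC₀ : C₀ / n ≤ |C₀| :=
    (div_le_div_of_nonneg_right (le_abs_self C₀) (Nat.cast_nonneg n)).trans
      (div_le_self (abs_nonneg C₀) (by exact_mod_cast hn))
  linarith [hx n hn, abs_sub_abs_le_abs_sub (x n - π * n) c]

theorem macmahon_riemann_sum_first_order_general (c C₀ : ℝ) :
    ∃ C : ℝ, 0 ≤ C ∧
      ∀ x : ℕ → ℝ,
        (∀ n : ℕ, 1 ≤ n → 0 < x n) →
        (∀ n : ℕ, 1 ≤ n → |x n - π * (n : ℝ) - c| ≤ C₀ / (n : ℝ)) →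
        ∀ η : ℝ, 0 < η →
          ∀ f : ℝ → ℝ,
            IntegrableOn f (Ici 0) →
            Differentiable ℝ f →
            ContinuousOn (deriv f) (Ici 0) →
            IntegrableOn (deriv f) (Ici 0) →
            Summable (fun n : ℕ => |f (x (n + 1) / Real.sqrt η)|) ∧
            |(1 / Real.sqrt η) * ∑' n : ℕ, f (x (n + 1) / Real.sqrt η)
                - (1 / π) * ∫ u in Ioi (0 : ℝ), f u|
              ≤ C * (∫ u in Ioi (0 : ℝ), |deriv f u|) / Real.sqrt η := by
  set R := |c| + |C₀|
  refine ⟨⌊1 + 2 * R / π⌋₊ + 1, by positivity, fun x hxpos hx η hη f hf hdf _ hdi => ?_⟩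
  set s := √η
  have hs : 0 < s := Real.sqrt_pos.2 hη
  have ht (n : ℕ) : |x (n + 1) / s - (n + 1) * (π / s)| ≤ R / s := by
    have hxn := abs_sub_pi_mul_le_of_abs_sub_le hx (Nat.le_add_left 1 n)
    rw [← mul_div_assoc, ← sub_div, abs_div, abs_of_pos hs]
    push_cast at hxn
    exact div_le_div_of_nonneg_right (by rwa [mul_comm]) hs.le
  obtain ⟨hsum, hbound⟩ := summable_abs_and_abs_mul_tsum_sub_integral_le
    (hf.mono_set Ioi_subset_Ici_self) hdf hdi (by positivity)
    (fun n => div_nonneg (hxpos (n + 1) (Nat.le_add_left 1 n)).le hs.le) ht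
  have hratio : 2 * (R / s) / (π / s) = 2 * R / π := by field_simp
  rw [hratio] at hbound
  refine ⟨hsum, ?_⟩
  have hrescale : 1 / s * ∑' n, f (x (n + 1) / s) - 1 / π * ∫ u in Ioi 0, f u
      = (π / s * ∑' n, f (x (n + 1) / s) - ∫ u in Ioi 0, f u) / π := by
    field_simp
  calc |1 / s * ∑' n, f (x (n + 1) / s) - 1 / π * ∫ u in Ioi 0, f u|
      = |π / s * ∑' n, f (x (n + 1) / s) - ∫ u in Ioi 0, f u| / π := by
        rw [hrescale, abs_div, abs_of_pos pi_pos]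
    _ ≤ π / s * ((⌊1 + 2 * R / π⌋₊ + 1) * ∫ u in Ioi 0, |deriv f u|) / π := by gcongr
    _ = (⌊1 + 2 * R / π⌋₊ + 1) * (∫ u in Ioi 0, |deriv f u|) / s := by
        field_simp

/-- First-order Riemann-sum estimate for the atomic measure
`μ^(η) = (1/√η) ∑_{n≥1} δ_{x_n/√η}`, for a sequence satisfying MacMahon-type
asymptotics `|x_n − πn − c| ≤ C₀/n`. -/
theorem macmahon_riemann_sum_first_order (c C₀ : ℝ) (hC₀ : 0 ≤ C₀) :
    ∃ C : ℝ, 0 ≤ C ∧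
      ∀ x : ℕ → ℝ,
        (∀ n : ℕ, 1 ≤ n → 0 < x n) →
        (∀ n : ℕ, 1 ≤ n → |x n - π * (n : ℝ) - c| ≤ C₀ / (n : ℝ)) →
        ∀ η : ℝ, 0 < η →
          ∀ f : ℝ → ℝ,
            IntegrableOn f (Ici 0) →
            Differentiable ℝ f →
            ContinuousOn (deriv f) (Ici 0) →
            IntegrableOn (deriv f) (Ici 0) →
            Summable (fun n : ℕ => |f (x (n + 1) / Real.sqrt η)|) ∧
            |(1 / Real.sqrt η) * ∑' n : ℕ, f (x (n + 1) / Real.sqrt η)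
                - (1 / π) * ∫ u in Ioi (0 : ℝ), f u|
              ≤ C * (∫ u in Ioi (0 : ℝ), |deriv f u|) / Real.sqrt η :=
  macmahon_riemann_sum_first_order_general c C₀
end

section
/- Let (x_n)_{n≥1} be a sequence of positive real numbers satisfying MacMahon-type asymptotics with parameters c ∈ ℝ and C₀ ≥ 0. Then there exists a constant C < ∞, depending only on c and C₀, such that for every η ≥ 1 and every twice differentiable function f : [0,∞) → ℝ with f(0) = 0, with f, f′ and f″ continuous and integrable on [0,∞), and with ∫_0^∞ |f′(u)|/u du < ∞, one has | (1/√η) ∑_{n≥1} f(x_n/√η) − (1/π) ∫_0^∞ f(u) du | ≤ C ( ∫_0^∞ |f″(u)| du + ∫_0^∞ |f′(u)|/u du ) / η. -/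
/-!
Put `h = π / √η`, `y n = x n / √η`, `κ = c / π` and `Γ = C₀ / π`, so that
`|y n - h (n + κ)| ≤ h Γ / n`. For `n > N = ⌈2Γ + |κ|⌉₊` the point `y n` lies in the cell of
length `h` centred at `h (n + κ)`, inside `[0, ∞)`. On that cell the midpoint rule gives
`h f (h (n + κ)) = ∫_cell f + O(h² ∫_cell |f''|)`, and moving from the midpoint to `y n` costs
`|y n - h (n + κ)| · sup_cell |f'|`. This distance is `O(h / n)` while the cell lies at distance
`≈ h n` from `0`, so the cost is `O(h² (∫_cell |f'| / u + ∫_cell |f''|))`. Summing over the cells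
handles the tail. The first `N` terms and the integral over `[0, h (N + κ + 1/2)]` are
`O(h² ∫ |f'| / u)`, because `f 0 = 0` gives `|f b| ≤ b ∫_0^b |f'| / u`.
-/

open MeasureTheory Real Set Filter

section Calculus

variable {f f' f'' : ℝ → ℝ} {a b : ℝ}

lemma abs_sub_le_integral_abs_deriv (hf : ∀ x, HasDerivAt f (f' x) x)
    (hf' : IntervalIntegrable f' volume a b) (hab : a ≤ b) {u v : ℝ}
    (hu : u ∈ Icc a b) (hv : v ∈ Icc a b) :
    |f u - f v| ≤ ∫ x in a..b, |f' x| := by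
  have hvu : uIcc v u ⊆ uIcc a b := uIcc_subset_uIcc (Icc_subset_uIcc hv) (Icc_subset_uIcc hu)
  rw [← intervalIntegral.integral_eq_sub_of_hasDerivAt (fun x _ => hf x) (hf'.mono_set hvu),
    intervalIntegral.integral_of_le hab, ← uIoc_of_le hab]
  calc ‖∫ x in v..u, f' x‖ ≤ ∫ x in uIoc v u, ‖f' x‖ :=
        intervalIntegral.norm_integral_le_integral_norm_uIoc
    _ ≤ ∫ x in uIoc a b, |f' x| :=
        setIntegral_mono_set hf'.norm.def' (ae_of_all _ fun _ => norm_nonneg _)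
          (uIoc_subset_uIoc_of_uIcc_subset_uIcc hvu).eventuallyLE

lemma mul_abs_le_integral_abs_add (hf : ∀ x, HasDerivAt f (f' x) x)
    (hf' : IntervalIntegrable f' volume a b) (hab : a ≤ b) {u : ℝ} (hu : u ∈ Icc a b) :
    (b - a) * |f u| ≤ (∫ x in a..b, |f x|) + (b - a) * ∫ x in a..b, |f' x| := by
  have hfc : Continuous f := continuous_iff_continuousAt.2 fun x => (hf x).continuousAt
  have key : ∫ _ in a..b, |f u| ≤ ∫ v in a..b, (|f v| + ∫ x in a..b, |f' x|) :=
    intervalIntegral.integral_mono_on hab intervalIntegrable_const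
      ((hfc.abs.intervalIntegrable _ _).add intervalIntegrable_const) fun v hv => by
        linarith [abs_sub_abs_le_abs_sub (f u) (f v),
          abs_sub_le_integral_abs_deriv hf hf' hab hu hv]
  rwa [intervalIntegral.integral_add (hfc.abs.intervalIntegrable _ _) intervalIntegrable_const,
    intervalIntegral.integral_const, intervalIntegral.integral_const, smul_eq_mul,
    smul_eq_mul] at key

lemma mul_abs_sub_le (hf : ∀ x, HasDerivAt f (f' x) x) (hf' : ∀ x, HasDerivAt f' (f'' x) x)
    (hf'' : IntervalIntegrable f'' volume a b) (hab : a < b) {y z : ℝ}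
    (hy : y ∈ Icc a b) (hz : z ∈ Icc a b) :
    (b - a) * |f y - f z| ≤
      |y - z| * ((∫ x in a..b, |f' x|) + (b - a) * ∫ x in a..b, |f'' x|) := by
  have hba : 0 < b - a := sub_pos.2 hab
  have hbound : ∀ u ∈ Icc a b,
      ‖f' u‖ ≤ ((∫ x in a..b, |f' x|) + (b - a) * ∫ x in a..b, |f'' x|) / (b - a) :=
    fun u hu => (le_div_iff₀' hba).2 (mul_abs_le_integral_abs_add hf' hf'' hab.le hu)
  have := (convex_Icc a b).norm_image_sub_le_of_norm_hasDerivWithin_le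
    (fun u _ => (hf u).hasDerivWithinAt) hbound hz hy
  rw [div_mul_eq_mul_div, le_div_iff₀' hba] at this
  simpa only [Real.norm_eq_abs, mul_comm |y - z|] using this

lemma integral_sub_mul_eq_integral_even_part (hf : Continuous f) (m r : ℝ) :
    (∫ x in m - r..m + r, f x) - 2 * r * f m =
      ∫ t in (0 : ℝ)..r, (f (m + t) + f (m - t) - 2 * f m) := by
  have hi : ∀ g : ℝ → ℝ, Continuous g → IntervalIntegrable g volume 0 r :=
    fun g hg => hg.intervalIntegrable _ _
  rw [intervalIntegral.integral_sub (hi _ (by fun_prop)) intervalIntegrable_const,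
    intervalIntegral.integral_add (hi _ (by fun_prop)) (hi _ (by fun_prop)),
    intervalIntegral.integral_comp_add_left f, intervalIntegral.integral_comp_sub_left f,
    intervalIntegral.integral_const, add_zero, sub_zero, add_comm (∫ x in m..m + r, f x),
    intervalIntegral.integral_add_adjacent_intervals (hf.intervalIntegrable _ _)
      (hf.intervalIntegrable _ _), smul_eq_mul]
  ring

lemma abs_integral_sub_mul_midpoint_le (hf : ∀ x, HasDerivAt f (f' x) x)
    (hf' : ∀ x, HasDerivAt f' (f'' x) x) (hf'' : IntervalIntegrable f'' volume a b)
    (hab : a ≤ b) :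
    |(∫ x in a..b, f x) - (b - a) * f ((a + b) / 2)| ≤
      (b - a) ^ 2 / 4 * ∫ x in a..b, |f'' x| := by
  obtain ⟨m, r, rfl, rfl, hr⟩ : ∃ m r, a = m - r ∧ b = m + r ∧ 0 ≤ r :=
    ⟨(a + b) / 2, (b - a) / 2, by ring, by ring, by linarith⟩
  rw [show (m - r + (m + r)) / 2 = m by ring, show m + r - (m - r) = 2 * r by ring]
  set A := ∫ x in m - r..m + r, |f'' x|
  have hA : 0 ≤ A := intervalIntegral.integral_nonneg (by linarith) fun _ _ => abs_nonneg _
  have hfc : Continuous f := continuous_iff_continuousAt.2 fun x => (hf x).continuousAt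
  set φ : ℝ → ℝ := fun t => f (m + t) + f (m - t) - 2 * f m
  have hφ : ∀ t, HasDerivAt φ (f' (m + t) - f' (m - t)) t := fun t => by
    have h1 := (hf (m + t)).comp t ((hasDerivAt_id t).const_add m)
    have h2 := (hf (m - t)).comp t ((hasDerivAt_id t).const_sub m)
    simpa [φ, sub_eq_add_neg] using (h1.add h2).sub_const (2 * f m)
  have hφ' : ∀ t ∈ Icc 0 r, ‖f' (m + t) - f' (m - t)‖ ≤ A := fun t ht =>
    abs_sub_le_integral_abs_deriv hf' hf'' (by linarith)
      ⟨by linarith [ht.1], by linarith [ht.2]⟩ ⟨by linarith [ht.2], by linarith [ht.1]⟩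
  have hφr : ∀ t ∈ uIoc 0 r, ‖φ t‖ ≤ A * r := fun t ht => by
    rw [uIoc_of_le hr] at ht
    have := (convex_Icc 0 r).norm_image_sub_le_of_norm_hasDerivWithin_le
      (fun t _ => (hφ t).hasDerivWithinAt) hφ' (left_mem_Icc.2 hr) (Ioc_subset_Icc_self ht)
    simp only [φ, add_zero, sub_zero, Real.norm_eq_abs] at this ⊢
    rw [show f m + f m - 2 * f m = 0 by ring, sub_zero, abs_of_pos ht.1] at this
    exact this.trans (mul_le_mul_of_nonneg_left ht.2 hA)
  rw [integral_sub_mul_eq_integral_even_part hfc]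
  calc ‖∫ t in (0 : ℝ)..r, φ t‖ ≤ A * r * |r - 0| :=
        intervalIntegral.norm_integral_le_of_norm_le_const hφr
    _ = (2 * r) ^ 2 / 4 * A := by rw [sub_zero, abs_of_nonneg hr]; ring

lemma setIntegral_Ioc_le_mul_setIntegral_div {g : ℝ → ℝ} (ha : 0 ≤ a) (hg : ∀ u, 0 ≤ g u)
    (hint : IntegrableOn (fun u => g u / u) (Ioc a b)) :
    ∫ u in Ioc a b, g u ≤ b * ∫ u in Ioc a b, g u / u := by
  rw [← integral_const_mul]
  refine integral_mono_of_nonneg (ae_of_all _ hg) (hint.const_mul b) ?_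
  filter_upwards [ae_restrict_mem measurableSet_Ioc] with u hu
  have hu0 : 0 < u := ha.trans_lt hu.1
  calc g u = u * (g u / u) := by field_simp
    _ ≤ b * (g u / u) := mul_le_mul_of_nonneg_right hu.2 (div_nonneg (hg u) hu0.le)

lemma abs_mul_sub_setIntegral_le (hf : ∀ x, HasDerivAt f (f' x) x)
    (hf' : ∀ x, HasDerivAt f' (f'' x) x) {h : ℝ} (hf'' : IntegrableOn f'' (Ioc a (a + h)))
    (hf'u : IntegrableOn (fun u => |f' u| / u) (Ioc a (a + h))) (ha : 0 ≤ a) (hh : 0 < h)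
    {y : ℝ} (hy : |y - (a + h / 2)| ≤ h / 2) :
    |h * f y - ∫ u in Ioc a (a + h), f u| ≤
      h ^ 2 / 4 * (∫ u in Ioc a (a + h), |f'' u|) + |y - (a + h / 2)| *
        ((a + h) * (∫ u in Ioc a (a + h), |f' u| / u) + h * ∫ u in Ioc a (a + h), |f'' u|) := by
  have hle : a ≤ a + h := by linarith
  have hf''i : IntervalIntegrable f'' volume a (a + h) :=
    (intervalIntegrable_iff_integrableOn_Ioc_of_le hle).2 hf''
  have hmid := abs_integral_sub_mul_midpoint_le hf hf' hf''i hle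
  have hlip := mul_abs_sub_le hf hf' hf''i (by linarith) (y := y) (z := a + h / 2)
    ⟨by linarith [(abs_le.1 hy).1], by linarith [(abs_le.1 hy).2]⟩ ⟨by linarith, by linarith⟩
  have hf'b : ∫ u in a..a + h, |f' u| ≤ (a + h) * ∫ u in Ioc a (a + h), |f' u| / u := by
    rw [intervalIntegral.integral_of_le hle]
    exact setIntegral_Ioc_le_mul_setIntegral_div ha (fun _ => abs_nonneg _) hf'u
  simp only [intervalIntegral.integral_of_le hle, show a + h - a = h by ring,
    show (a + (a + h)) / 2 = a + h / 2 by ring] at hmid hlip hf'b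
  have htri : |h * f y - ∫ u in Ioc a (a + h), f u| ≤
      h * |f y - f (a + h / 2)| + |(∫ u in Ioc a (a + h), f u) - h * f (a + h / 2)| := by
    calc |h * f y - ∫ u in Ioc a (a + h), f u|
        = |h * (f y - f (a + h / 2)) - ((∫ u in Ioc a (a + h), f u) - h * f (a + h / 2))| := by
          ring_nf
      _ ≤ _ := (abs_sub _ _).trans_eq (by rw [abs_mul, abs_of_pos hh])
  nlinarith [mul_le_mul_of_nonneg_left hf'b (abs_nonneg (y - (a + h / 2)))]

lemma abs_mul_sub_setIntegral_le_of_abs_sub_le_div (hf : ∀ x, HasDerivAt f (f' x) x)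
    (hf' : ∀ x, HasDerivAt f' (f'' x) x) {h Γ : ℝ} (hf''i : IntegrableOn f'' (Ioc a (a + h)))
    (hf'u : IntegrableOn (fun u => |f' u| / u) (Ioc a (a + h))) (ha : 0 ≤ a) (hh : 0 < h)
    {m y : ℝ} (hm : 0 < m) (hΓm : 2 * Γ ≤ m) (ham : a + h ≤ 2 * h * m)
    (hy : |y - (a + h / 2)| ≤ h * Γ / m) :
    |h * f y - ∫ u in Ioc a (a + h), f u| ≤
      h ^ 2 * (3 / 4 * (∫ u in Ioc a (a + h), |f'' u|) +
        2 * Γ * ∫ u in Ioc a (a + h), |f' u| / u) := by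
  set δ := |y - (a + h / 2)|
  have hδh : δ ≤ h / 2 := hy.trans <| by rw [div_le_iff₀ hm]; nlinarith
  have hδa : δ * (a + h) ≤ 2 * Γ * h ^ 2 :=
    calc δ * (a + h) ≤ h * Γ / m * (2 * h * m) :=
          mul_le_mul hy ham (by positivity) ((abs_nonneg _).trans hy)
      _ = 2 * Γ * h ^ 2 := by field_simp
  have hA₁ : 0 ≤ ∫ u in Ioc a (a + h), |f' u| / u := setIntegral_nonneg measurableSet_Ioc
    fun u hu => div_nonneg (abs_nonneg _) (ha.trans hu.1.le)
  have hA₂ : 0 ≤ ∫ u in Ioc a (a + h), |f'' u| :=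
    setIntegral_nonneg measurableSet_Ioc fun u _ => abs_nonneg _
  have := abs_mul_sub_setIntegral_le hf hf' hf''i hf'u ha hh hδh
  nlinarith [mul_le_mul_of_nonneg_right hδa hA₁, mul_le_mul_of_nonneg_right hδh hA₂]

lemma abs_le_mul_setIntegral_abs_deriv_div (hf : ∀ x, HasDerivAt f (f' x) x)
    (hf'c : Continuous f') (h0 : f 0 = 0) (hint : IntegrableOn (fun u => |f' u| / u) (Ioi 0))
    (hb : 0 ≤ b) :
    |f b| ≤ b * ∫ u in Ioi 0, |f' u| / u := by
  calc |f b| = |f b - f 0| := by rw [h0, sub_zero]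
    _ ≤ ∫ u in Ioc 0 b, |f' u| := by
        rw [← intervalIntegral.integral_of_le hb]
        exact abs_sub_le_integral_abs_deriv hf (hf'c.intervalIntegrable _ _) hb
          (right_mem_Icc.2 hb) (left_mem_Icc.2 hb)
    _ ≤ b * ∫ u in Ioc 0 b, |f' u| / u :=
        setIntegral_Ioc_le_mul_setIntegral_div le_rfl (fun _ => abs_nonneg _)
          (hint.mono_set Ioc_subset_Ioi_self)
    _ ≤ b * ∫ u in Ioi 0, |f' u| / u := by
        refine mul_le_mul_of_nonneg_left (setIntegral_mono_set hint ?_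
          Ioc_subset_Ioi_self.eventuallyLE) hb
        filter_upwards [ae_restrict_mem measurableSet_Ioi] with u hu
        exact div_nonneg (abs_nonneg _) hu.le

lemma setIntegral_Ioc_zero_abs_le (hf : ∀ x, HasDerivAt f (f' x) x)
    (hf'c : Continuous f') (h0 : f 0 = 0) (hint : IntegrableOn (fun u => |f' u| / u) (Ioi 0))
    (hb : 0 ≤ b) :
    ∫ u in Ioc 0 b, |f u| ≤ b ^ 2 / 2 * ∫ u in Ioi 0, |f' u| / u := by
  have hfc : Continuous f := continuous_iff_continuousAt.2 fun x => (hf x).continuousAt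
  calc ∫ u in Ioc 0 b, |f u| ≤ ∫ u in Ioc 0 b, u * ∫ v in Ioi 0, |f' v| / v :=
        setIntegral_mono_on hfc.abs.integrableOn_Ioc (by fun_prop : Continuous _).integrableOn_Ioc
          measurableSet_Ioc fun u hu =>
            abs_le_mul_setIntegral_abs_deriv_div hf hf'c h0 hint hu.1.le
    _ = b ^ 2 / 2 * ∫ u in Ioi 0, |f' u| / u := by
        rw [← intervalIntegral.integral_of_le hb, intervalIntegral.integral_mul_const, integral_id]
        ring

end Calculus

section RiemannSums

variable {g : ℝ → ℝ} {a : ℕ → ℝ}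

lemma hasSum_setIntegral_Ioc_of_monotone (ha : Monotone a) (ha' : Tendsto a atTop atTop)
    (hg : IntegrableOn g (Ioi (a 0))) :
    HasSum (fun n => ∫ u in Ioc (a n) (a (n + 1)), g u) (∫ u in Ioi (a 0), g u) := by
  have hU : ⋃ n, Ioc (a n) (a (n + 1)) = Ioi (a 0) := by
    simpa only [Nat.bot_eq_zero, Order.succ_eq_add_one] using
      iUnion_Ioc_map_succ_eq_Ioi (f := a) (fun n => ha (Nat.zero_le n))
        (not_bddAbove_of_tendsto_atTop ha')
  rw [← hU] at hg ⊢
  exact hasSum_integral_iUnion (fun _ => measurableSet_Ioc)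
    (by simpa only [Order.succ_eq_add_one] using ha.pairwise_disjoint_on_Ioc_succ) hg

lemma setIntegral_Ioi_mono {c d : ℝ} (hcd : c ≤ d) (hg : IntegrableOn g (Ioi c))
    (hg₀ : ∀ u > c, 0 ≤ g u) :
    ∫ u in Ioi d, g u ≤ ∫ u in Ioi c, g u :=
  setIntegral_mono_set hg ((ae_restrict_iff' measurableSet_Ioi).2 (ae_of_all _ hg₀))
    (Ioi_subset_Ioi hcd).eventuallyLE

lemma summable_and_abs_tsum_sub_setIntegral_le (ha : Monotone a) (ha' : Tendsto a atTop atTop)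
    (hg : IntegrableOn g (Ioi (a 0))) {v e : ℕ → ℝ} {E : ℝ} (he : HasSum e E)
    (hv : ∀ n, |v n - ∫ u in Ioc (a n) (a (n + 1)), g u| ≤ e n) :
    Summable v ∧ |∑' n, v n - ∫ u in Ioi (a 0), g u| ≤ E := by
  have hd : HasSum (fun n => v n - ∫ u in Ioc (a n) (a (n + 1)), g u) _ :=
    (Summable.of_norm_bounded he.summable hv).hasSum
  have hvsum := (hasSum_setIntegral_Ioc_of_monotone ha ha' hg).add hd
  simp only [add_sub_cancel] at hvsum
  refine ⟨hvsum.summable, ?_⟩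
  rw [hvsum.tsum_eq, add_sub_cancel_left]
  exact hd.norm_le_of_bounded he hv

end RiemannSums

section MacMahon

variable {f f' f'' : ℝ → ℝ} {h κ Γ : ℝ} {y : ℕ → ℝ}

lemma summable_and_abs_tail_sub_setIntegral_le (hf : ∀ x, HasDerivAt f (f' x) x)
    (hf' : ∀ x, HasDerivAt f' (f'' x) x) (hfi : IntegrableOn f (Ioi 0))
    (hf''i : IntegrableOn f'' (Ioi 0)) (hf'u : IntegrableOn (fun u => |f' u| / u) (Ioi 0))
    (hh : 0 < h) (hΓ : 0 ≤ Γ) {N : ℕ} (hκN : |κ| ≤ N) (hΓN : 2 * Γ ≤ N)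
    (hy : ∀ n : ℕ, 1 ≤ n → |y n - h * (n + κ)| ≤ h * Γ / n) :
    Summable (fun n => f (y (n + N + 1))) ∧
      |h * ∑' n, f (y (n + N + 1)) - ∫ u in Ioi (h * (N + κ + 1 / 2)), f u| ≤
        h ^ 2 * (3 / 4 * (∫ u in Ioi 0, |f'' u|) + 2 * Γ * ∫ u in Ioi 0, |f' u| / u) := by
  set T := h * (N + κ + 1 / 2)
  have hT : 0 ≤ T := mul_nonneg hh.le (by linarith [neg_abs_le κ])
  set a : ℕ → ℝ := fun n => T + n * h
  have ha : Monotone a := fun m n hmn => by simp only [a]; gcongr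
  have ha' : Tendsto a atTop atTop :=
    tendsto_atTop_add_const_left _ _ (tendsto_natCast_atTop_atTop.atTop_mul_const hh)
  have ha0 : a 0 = T := by simp [a]
  have hpos : Ioi T ⊆ Ioi 0 := Ioi_subset_Ioi hT
  have hA₁ := hasSum_setIntegral_Ioc_of_monotone ha ha' (ha0 ▸ hf'u.mono_set hpos)
  have hA₂ := hasSum_setIntegral_Ioc_of_monotone ha ha' (ha0 ▸ IntegrableOn.mono_set hf''i.abs hpos)
  have hcell : ∀ n, |h * f (y (n + N + 1)) - ∫ u in Ioc (a n) (a (n + 1)), f u| ≤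
      h ^ 2 * (3 / 4 * (∫ u in Ioc (a n) (a (n + 1)), |f'' u|) +
        2 * Γ * ∫ u in Ioc (a n) (a (n + 1)), |f' u| / u) := by
    intro n
    have hsucc : a (n + 1) = a n + h := by simp only [a]; push_cast; ring
    have han : 0 ≤ a n := hT.trans (ha0 ▸ ha (Nat.zero_le n))
    have hsub : Ioc (a n) (a n + h) ⊆ Ioi 0 := Ioc_subset_Ioi_self.trans (Ioi_subset_Ioi han)
    have hmN : (N : ℝ) + 1 ≤ ((n + N + 1 : ℕ) : ℝ) := by
      push_cast; linarith [(n.cast_nonneg : (0 : ℝ) ≤ n)]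
    rw [hsucc]
    refine abs_mul_sub_setIntegral_le_of_abs_sub_le_div hf hf' (hf''i.mono_set hsub)
      (hf'u.mono_set hsub) han hh (m := ((n + N + 1 : ℕ) : ℝ))
      (by linarith [N.cast_nonneg (α := ℝ)]) (by linarith) ?_ ?_
    · simp only [a, T]; push_cast; nlinarith [le_abs_self κ]
    · convert hy (n + N + 1) (by omega) using 3
      simp only [a, T]; push_cast; ring
  obtain ⟨hsum, hbound⟩ := summable_and_abs_tsum_sub_setIntegral_le ha ha'
    (ha0 ▸ hfi.mono_set hpos) (((hA₂.mul_left (3 / 4)).add (hA₁.mul_left (2 * Γ))).mul_left (h ^ 2))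
    hcell
  refine ⟨(summable_mul_left_iff hh.ne').1 hsum, ?_⟩
  rw [ha0, tsum_mul_left] at hbound
  have h₁ := setIntegral_Ioi_mono hT hf'u fun u hu => div_nonneg (abs_nonneg _) (le_of_lt hu)
  have h₂ := setIntegral_Ioi_mono hT hf''i.abs fun u _ => abs_nonneg (f'' u)
  exact hbound.trans (by gcongr)


lemma abs_mul_sum_range_sub_setIntegral_Ioc_le (hf : ∀ x, HasDerivAt f (f' x) x)
    (hf'c : Continuous f') (h0 : f 0 = 0) (hf'u : IntegrableOn (fun u => |f' u| / u) (Ioi 0))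
    (hh : 0 < h) (hΓ : 0 ≤ Γ) (hy₀ : ∀ n : ℕ, 1 ≤ n → 0 ≤ y n)
    (hy : ∀ n : ℕ, 1 ≤ n → |y n - h * (n + κ)| ≤ h * Γ / n) (N : ℕ) {T : ℝ} (hT : 0 ≤ T)
    (hTN : T ≤ h * (N + |κ| + Γ + 1)) :
    |h * ∑ n ∈ Finset.range N, f (y (n + 1)) - ∫ u in Ioc 0 T, f u| ≤
      h ^ 2 * (3 / 2 * (N + |κ| + Γ + 1) ^ 2) * ∫ u in Ioi 0, |f' u| / u := by
  set L : ℝ := N + |κ| + Γ + 1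
  set M₁ := ∫ u in Ioi 0, |f' u| / u
  have hM₁ : 0 ≤ M₁ := setIntegral_nonneg measurableSet_Ioi fun u hu =>
    div_nonneg (abs_nonneg _) (le_of_lt hu)
  have hterm : ∀ n ∈ Finset.range N, |f (y (n + 1))| ≤ h * L * M₁ := by
    intro n hn
    have hn1 : (1 : ℝ) ≤ (n + 1 : ℕ) := by exact_mod_cast Nat.succ_pos n
    have hnN : ((n + 1 : ℕ) : ℝ) ≤ N := by exact_mod_cast Finset.mem_range.1 hn
    have hlat : h * ((n + 1 : ℕ) + κ) ≤ h * (N + |κ|) :=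
      mul_le_mul_of_nonneg_left (by linarith [le_abs_self κ]) hh.le
    have hΓn : h * Γ / (n + 1 : ℕ) ≤ h * Γ := div_le_self (by positivity) hn1
    have hyn : y (n + 1) ≤ h * L := by
      linarith [(abs_le.1 (hy (n + 1) (by omega))).2,
        show h * L = h * (N + |κ|) + h * Γ + h by ring]
    exact (abs_le_mul_setIntegral_abs_deriv_div hf hf'c h0 hf'u (hy₀ _ (by omega))).trans
      (mul_le_mul_of_nonneg_right hyn hM₁)
  have hsum : |∑ n ∈ Finset.range N, f (y (n + 1))| ≤ N * (h * L * M₁) :=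
    calc _ ≤ ∑ n ∈ Finset.range N, |f (y (n + 1))| := Finset.abs_sum_le_sum_abs _ _
      _ ≤ ∑ _n ∈ Finset.range N, h * L * M₁ := Finset.sum_le_sum hterm
      _ = _ := by rw [Finset.sum_const, Finset.card_range, nsmul_eq_mul]
  have hint : |∫ u in Ioc 0 T, f u| ≤ (h * L) ^ 2 / 2 * M₁ :=
    abs_integral_le_integral_abs.trans ((setIntegral_Ioc_zero_abs_le hf hf'c h0 hf'u hT).trans
      (mul_le_mul_of_nonneg_right (by gcongr) hM₁))
  have hNL : (N : ℝ) ≤ L := by linarith [abs_nonneg κ]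
  calc _ ≤ h * |∑ n ∈ Finset.range N, f (y (n + 1))| + |∫ u in Ioc 0 T, f u| :=
        (abs_sub _ _).trans_eq (by rw [abs_mul, abs_of_pos hh])
    _ ≤ h * (N * (h * L * M₁)) + (h * L) ^ 2 / 2 * M₁ := by gcongr
    _ ≤ h * (L * (h * L * M₁)) + (h * L) ^ 2 / 2 * M₁ := by gcongr
    _ = h ^ 2 * (3 / 2 * L ^ 2) * M₁ := by ring

noncomputable def riemannSumConst (κ Γ : ℝ) : ℝ := 2 * (⌈2 * Γ + |κ|⌉₊ + |κ| + Γ + 1) ^ 2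

theorem summable_and_abs_riemannSum_sub_integral_le (hf : ∀ x, HasDerivAt f (f' x) x)
    (hf' : ∀ x, HasDerivAt f' (f'' x) x) (h0 : f 0 = 0) (hfi : IntegrableOn f (Ioi 0))
    (hf''i : IntegrableOn f'' (Ioi 0)) (hf'u : IntegrableOn (fun u => |f' u| / u) (Ioi 0))
    (hh : 0 < h) (hΓ : 0 ≤ Γ) (hy₀ : ∀ n : ℕ, 1 ≤ n → 0 ≤ y n)
    (hy : ∀ n : ℕ, 1 ≤ n → |y n - h * (n + κ)| ≤ h * Γ / n) :
    Summable (fun n => f (y (n + 1))) ∧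
      |h * ∑' n, f (y (n + 1)) - ∫ u in Ioi 0, f u| ≤
        h ^ 2 * riemannSumConst κ Γ * ((∫ u in Ioi 0, |f'' u|) + ∫ u in Ioi 0, |f' u| / u) := by
  set N := ⌈2 * Γ + |κ|⌉₊
  have hN : 2 * Γ + |κ| ≤ N := Nat.le_ceil _
  obtain ⟨htail_sum, htail⟩ := summable_and_abs_tail_sub_setIntegral_le hf hf' hfi hf''i hf'u hh hΓ
    (by linarith) (by linarith [abs_nonneg κ]) hy
  have hsum : Summable (fun n => f (y (n + 1))) := (summable_nat_add_iff N).1 htail_sum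
  refine ⟨hsum, ?_⟩
  set T := h * (N + κ + 1 / 2)
  have hT : 0 ≤ T := mul_nonneg hh.le (by linarith [neg_abs_le κ, abs_nonneg κ])
  have hhead := abs_mul_sum_range_sub_setIntegral_Ioc_le hf
    (continuous_iff_continuousAt.2 fun x => (hf' x).continuousAt) h0 hf'u hh hΓ hy₀ hy N hT
    (mul_le_mul_of_nonneg_left (by linarith [le_abs_self κ]) hh.le)
  have hsplit : ∫ u in Ioi 0, f u = (∫ u in Ioc 0 T, f u) + ∫ u in Ioi T, f u := by
    rw [← setIntegral_union (Ioc_disjoint_Ioi le_rfl) measurableSet_Ioi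
      (hfi.mono_set Ioc_subset_Ioi_self) (hfi.mono_set (Ioi_subset_Ioi hT)),
      Ioc_union_Ioi_eq_Ioi hT]
  rw [← hsum.sum_add_tsum_nat_add N, hsplit, mul_add, add_sub_add_comm]
  refine (abs_add_le _ _).trans ((add_le_add hhead htail).trans ?_)
  set L : ℝ := N + |κ| + Γ + 1
  have hΓL : 2 * Γ ≤ L ^ 2 / 2 := by nlinarith [abs_nonneg κ, sq_nonneg (L - 1 - Γ)]
  have hL : (3 / 4 : ℝ) ≤ 2 * L ^ 2 := by nlinarith [abs_nonneg κ]
  have hM₁ : 0 ≤ ∫ u in Ioi 0, |f' u| / u := setIntegral_nonneg measurableSet_Ioi fun u hu =>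
    div_nonneg (abs_nonneg _) (le_of_lt hu)
  have hM₂ : 0 ≤ ∫ u in Ioi 0, |f'' u| :=
    setIntegral_nonneg measurableSet_Ioi fun u _ => abs_nonneg _
  rw [riemannSumConst]
  nlinarith [mul_le_mul_of_nonneg_right hΓL hM₁, mul_le_mul_of_nonneg_right hL hM₂, sq_nonneg h]

end MacMahon

/-- Second-order (midpoint-rule) Riemann-sum estimate for the atomic
measure `μ^(η) = (1/√η) ∑_{n≥1} δ_{x_n/√η}`, for a sequence satisfying MacMahon-type
asymptotics `|x_n − πn − c| ≤ C₀/n`, valid for functions vanishing at `0`. -/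
theorem macmahon_riemann_sum_second_order (c C₀ : ℝ) (hC₀ : 0 ≤ C₀) :
    ∃ C : ℝ, 0 ≤ C ∧
      ∀ x : ℕ → ℝ,
        (∀ n : ℕ, 1 ≤ n → 0 < x n) →
        (∀ n : ℕ, 1 ≤ n → |x n - π * (n : ℝ) - c| ≤ C₀ / (n : ℝ)) →
        ∀ η : ℝ, 1 ≤ η →
          ∀ f : ℝ → ℝ,
            f 0 = 0 →
            Differentiable ℝ f →
            Differentiable ℝ (deriv f) →
            ContinuousOn f (Ici 0) →
            ContinuousOn (deriv f) (Ici 0) →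
            ContinuousOn (deriv (deriv f)) (Ici 0) →
            IntegrableOn f (Ici 0) →
            IntegrableOn (deriv f) (Ici 0) →
            IntegrableOn (deriv (deriv f)) (Ici 0) →
            IntegrableOn (fun u : ℝ => |deriv f u| / u) (Ioi 0) →
            Summable (fun n : ℕ => |f (x (n + 1) / Real.sqrt η)|) ∧
            |(1 / Real.sqrt η) * ∑' n : ℕ, f (x (n + 1) / Real.sqrt η)
                - (1 / π) * ∫ u in Ioi (0 : ℝ), f u|
              ≤ C * ((∫ u in Ioi (0 : ℝ), |deriv (deriv f) u|)
                  + ∫ u in Ioi (0 : ℝ), |deriv f u| / u) / η := by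
  refine ⟨π * riemannSumConst (c / π) (C₀ / π), by unfold riemannSumConst; positivity, ?_⟩
  intro x hx hxc η hη f hf0 hdf hdf' _ _ _ hfi _ hf''i hf'u
  have hs : 0 < √η := Real.sqrt_pos.2 (by linarith)
  have hy : ∀ n : ℕ, 1 ≤ n →
      |x n / √η - π / √η * (n + c / π)| ≤ π / √η * (C₀ / π) / n := fun n hn => by
    rw [show x n / √η - π / √η * (n + c / π) = (x n - π * n - c) / √η by field_simp; ring,
      show π / √η * (C₀ / π) / n = C₀ / n / √η by field_simp, abs_div, abs_of_pos hs]
    exact div_le_div_of_nonneg_right (hxc n hn) hs.le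
  obtain ⟨hsum, hbound⟩ := summable_and_abs_riemannSum_sub_integral_le
    (fun x => (hdf x).hasDerivAt) (fun x => (hdf' x).hasDerivAt) hf0
    (hfi.mono_set Ioi_subset_Ici_self) (hf''i.mono_set Ioi_subset_Ici_self) hf'u
    (div_pos pi_pos hs) (div_nonneg hC₀ pi_pos.le) (fun n hn => (div_pos (hx n hn) hs).le) hy
  refine ⟨hsum.abs, ?_⟩
  rw [show (1 / √η) * ∑' n, f (x (n + 1) / √η) - (1 / π) * ∫ u in Ioi 0, f u =
      (π / √η * ∑' n, f (x (n + 1) / √η) - ∫ u in Ioi 0, f u) / π by field_simp,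
    abs_div, abs_of_pos pi_pos, div_le_iff₀ pi_pos]
  refine hbound.trans_eq ?_
  rw [div_pow, sq_sqrt (by linarith)]
  field_simp
end

section
/- Let (x_n)_{n≥1} be a strictly increasing sequence of positive real numbers satisfying MacMahon-type asymptotics with parameters c ∈ ℝ and C₀ ≥ 0. Then there exists a constant C < ∞ (which may depend on the sequence) such that for every n ≥ 1: ∑_{m>n} 1/(x_m² − x_n²) ≤ C · log(n+1)/n. -/
open Real

/-!
Write `x_n = πn + c + ε_n` with `|ε_n| ≤ C₀/n`. Once `n` or `m - n` is large compared with
`|c| + C₀`, the errors are absorbed and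
`x_m² - x_n² = (x_m - x_n)(x_m + x_n) ≥ (π²/4)(m - n)m`.
The finitely many remaining pairs `(n, m)` only enlarge the constant, so every term of the series
is at most `D/((m - n)m)`, and with `m = n + k + 1`
`∑_k 1/((k+1)(n+k+1)) = (1/n) ∑_k (1/(k+1) - 1/(n+k+1)) ≤ H_n/n ≤ 3 log(n+1)/n`.
-/

def MacMahonAsymptotics (c C₀ : ℝ) (x : ℕ → ℝ) : Prop :=
  ∀ n : ℕ, 1 ≤ n → |x n - π * n - c| ≤ C₀ / n

lemma exists_forall_le_mul_of_forall_mem_diff {α : Type*} {f g : α → ℝ} {s t : Set α}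
    {A : ℝ} (hs : s.Finite) (hg : ∀ a ∈ t, 0 < g a) (h : ∀ a ∈ t \ s, f a ≤ A * g a) :
    ∃ D, 0 ≤ D ∧ ∀ a ∈ t, f a ≤ D * g a := by
  obtain ⟨B, hB⟩ := (hs.image fun a => f a / g a).bddAbove
  refine ⟨max (max A B) 0, le_max_right _ _, fun a ha => ?_⟩
  have hA : A ≤ max (max A B) 0 := (le_max_left _ _).trans (le_max_left _ _)
  have hB' : B ≤ max (max A B) 0 := (le_max_right _ _).trans (le_max_left _ _)
  by_cases has : a ∈ s
  · exact (div_le_iff₀ (hg a ha)).1 ((hB ⟨a, has, rfl⟩).trans hB')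
  · exact (h a ⟨ha, has⟩).trans (mul_le_mul_of_nonneg_right hA (hg a ha).le)

lemma tsum_le_tsum_of_summable_of_nonneg {ι : Type*} {f g : ι → ℝ} (hfg : ∀ i, f i ≤ g i)
    (hg : Summable g) (hg0 : ∀ i, 0 ≤ g i) : ∑' i, f i ≤ ∑' i, g i := by
  by_cases hf : Summable f
  · exact hf.tsum_le_tsum hfg hg
  · rw [tsum_eq_zero_of_not_summable hf]
    exact tsum_nonneg hg0

lemma harmonic_le_three_mul_log_add_one {n : ℕ} (hn : 1 ≤ n) :
    (harmonic n : ℝ) ≤ 3 * log (n + 1) := by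
  have hn' : (1 : ℝ) ≤ n := by exact_mod_cast hn
  have hlog : log n ≤ log (n + 1) := log_le_log (by linarith) (by linarith)
  have hlog2 : log 2 ≤ log (n + 1) := log_le_log (by norm_num) (by linarith)
  linarith [harmonic_le_one_add_log n, log_two_gt_d9]

lemma sum_range_one_div_mul_le {n : ℕ} (hn : 1 ≤ n) (K : ℕ) :
    ∑ k ∈ Finset.range K, 1 / (((k : ℝ) + 1) * (n + k + 1)) ≤ 3 * log (n + 1) / n := by
  have hn' : (0 : ℝ) < n := by exact_mod_cast hn
  have hpartial : ∀ k : ℕ,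
      1 / (((k : ℝ) + 1) * (n + k + 1)) = (1 / (k + 1) - 1 / (n + k + 1)) / n := by
    intro k
    field_simp
    ring
  have hharm : ∑ k ∈ Finset.range n, 1 / ((k : ℝ) + 1) = harmonic n := by
    simp [harmonic, one_div]
  have hshift : ∑ k ∈ Finset.range K, 1 / ((k : ℝ) + 1)
      ≤ ∑ k ∈ Finset.range n, 1 / ((k : ℝ) + 1)
        + ∑ k ∈ Finset.range K, 1 / ((n : ℝ) + k + 1) := by
    calc ∑ k ∈ Finset.range K, 1 / ((k : ℝ) + 1)
        ≤ ∑ k ∈ Finset.range (n + K), 1 / ((k : ℝ) + 1) :=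
          Finset.sum_le_sum_of_subset_of_nonneg (Finset.range_subset_range.2 (by omega))
            fun _ _ _ => by positivity
      _ = _ := by
          rw [Finset.sum_range_add]
          push_cast
          rfl
  simp_rw [hpartial, ← Finset.sum_div, Finset.sum_sub_distrib]
  gcongr
  linarith [harmonic_le_three_mul_log_add_one hn]

namespace MacMahonAsymptotics

variable {c C₀ : ℝ} {x : ℕ → ℝ} {n m : ℕ}

lemma const_nonneg (h : MacMahonAsymptotics c C₀ x) : 0 ≤ C₀ := by
  simpa using (abs_nonneg _).trans (h 1 le_rfl)

lemma pi_mul_sub_div_two_le_sub (h : MacMahonAsymptotics c C₀ x) (hn : 1 ≤ n) (hnm : n < m)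
    (hlarge : 4 * C₀ ≤ π * n ∨ 4 * C₀ ≤ π * (m - n)) : π * (m - n) / 2 ≤ x m - x n := by
  have hn' : (1 : ℝ) ≤ n := by exact_mod_cast hn
  have hnm' : (n : ℝ) + 1 ≤ m := by exact_mod_cast hnm
  have hC₀ := h.const_nonneg
  have hxn := abs_le.1 (h n hn)
  have hxm := abs_le.1 (h m (by omega))
  have hmn : C₀ / m ≤ C₀ / n := div_le_div_of_nonneg_left hC₀ (by linarith) (by linarith)
  rcases hlarge with hlarge | hlarge
  · have : C₀ / n ≤ π / 4 := by
      rw [div_le_iff₀ (by linarith)]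
      linarith
    have : π ≤ π * (m - n) := by nlinarith [pi_pos]
    linarith [hxn.2, hxm.1]
  · have : C₀ / n ≤ C₀ := div_le_self hC₀ hn'
    linarith [hxn.2, hxm.1]

lemma pi_mul_div_two_le_add (h : MacMahonAsymptotics c C₀ x) (hn : 1 ≤ n) (hnm : n < m)
    (hlarge : 4 * (|c| + C₀) ≤ π * n ∨ 4 * (|c| + C₀) ≤ π * (m - n)) :
    π * m / 2 ≤ x m + x n := by
  have hn' : (1 : ℝ) ≤ n := by exact_mod_cast hn
  have hnm' : (n : ℝ) + 1 ≤ m := by exact_mod_cast hnm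
  have hC₀ := h.const_nonneg
  have hxn := abs_le.1 (h n hn)
  have hxm := abs_le.1 (h m (by omega))
  have hCn : C₀ / n ≤ C₀ := div_le_self hC₀ hn'
  have hCm : C₀ / m ≤ C₀ := div_le_self hC₀ (by linarith)
  have hsum : π * (m + n) - 2 * (|c| + C₀) ≤ x m + x n := by
    linarith [hxn.1, hxm.1, neg_abs_le c]
  have hπn : 0 ≤ π * n := by positivity
  have hπm : 0 ≤ π * m := by positivity
  rcases hlarge with hlarge | hlarge <;> linarith

lemma pi_sq_div_four_mul_le_sq_sub_sq (h : MacMahonAsymptotics c C₀ x) (hn : 1 ≤ n) (hnm : n < m)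
    (hlarge : 4 * (|c| + C₀) ≤ π * n ∨ 4 * (|c| + C₀) ≤ π * (m - n)) :
    π ^ 2 / 4 * ((m - n) * m) ≤ x m ^ 2 - x n ^ 2 := by
  have hnm' : (n : ℝ) < m := by exact_mod_cast hnm
  have hsub := h.pi_mul_sub_div_two_le_sub hn hnm <|
    hlarge.imp (fun h => by linarith [abs_nonneg c]) fun h => by linarith [abs_nonneg c]
  have hadd := h.pi_mul_div_two_le_add hn hnm hlarge
  calc π ^ 2 / 4 * ((m - n) * m) = (π * (m - n) / 2) * (π * m / 2) := by ring
    _ ≤ (x m - x n) * (x m + x n) :=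
        mul_le_mul hsub hadd (by positivity) (by nlinarith [pi_pos])
    _ = x m ^ 2 - x n ^ 2 := by ring

lemma one_div_sq_sub_sq_le (h : MacMahonAsymptotics c C₀ x) (hn : 1 ≤ n) (k : ℕ)
    (hlarge : 4 * (|c| + C₀) ≤ π * n ∨ 4 * (|c| + C₀) ≤ π * (k + 1)) :
    1 / (x (n + k + 1) ^ 2 - x n ^ 2) ≤ 4 / π ^ 2 * (1 / (((k : ℝ) + 1) * (n + k + 1))) := by
  have hmn : ((n + k + 1 : ℕ) : ℝ) - n = k + 1 := by push_cast; ring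
  have hgap := h.pi_sq_div_four_mul_le_sq_sub_sq hn (m := n + k + 1) (by omega) (by rwa [hmn])
  rw [hmn] at hgap
  push_cast at hgap
  calc 1 / (x (n + k + 1) ^ 2 - x n ^ 2) ≤ 1 / (π ^ 2 / 4 * (((k : ℝ) + 1) * (n + k + 1))) :=
        one_div_le_one_div_of_le (by positivity) hgap
    _ = 4 / π ^ 2 * (1 / (((k : ℝ) + 1) * (n + k + 1))) := by field_simp

end MacMahonAsymptotics

theorem macmahon_inverse_gap_sum_general (c C₀ : ℝ) (x : ℕ → ℝ)
    (hmac : ∀ n : ℕ, 1 ≤ n → |x n - π * (n : ℝ) - c| ≤ C₀ / (n : ℝ)) :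
    ∃ C : ℝ, 0 ≤ C ∧
      ∀ n : ℕ, 1 ≤ n →
        (∑' k : ℕ, 1 / ((x (n + k + 1)) ^ 2 - (x n) ^ 2))
          ≤ C * Real.log ((n : ℝ) + 1) / (n : ℝ) := by
  obtain ⟨N, hN⟩ := exists_nat_gt (4 * (|c| + C₀) / π)
  have hlarge : ∀ j : ℕ, N ≤ j → 4 * (|c| + C₀) ≤ π * j := fun j hj =>
    ((div_lt_iff₀' pi_pos).1 hN).le.trans (by gcongr)
  obtain ⟨D, hD0, hD⟩ := exists_forall_le_mul_of_forall_mem_diff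
    (f := fun p : ℕ × ℕ => 1 / (x (p.1 + p.2 + 1) ^ 2 - x p.1 ^ 2))
    (g := fun p => 1 / (((p.2 : ℝ) + 1) * (p.1 + p.2 + 1))) (t := {p | 1 ≤ p.1})
    ((Set.finite_Iio N).prod (Set.finite_Iio N)) (fun _ _ => by positivity)
    fun ⟨n, k⟩ ⟨hn, hs⟩ => MacMahonAsymptotics.one_div_sq_sub_sq_le hmac hn k <| by
      simp only [Set.mem_prod, Set.mem_Iio, not_and_or, not_lt] at hs
      exact hs.imp (hlarge n) fun hk => by exact_mod_cast hlarge (k + 1) (by omega)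
  refine ⟨3 * D, by positivity, fun n hn => ?_⟩
  have hg0 : ∀ k : ℕ, 0 ≤ 1 / (((k : ℝ) + 1) * (n + k + 1)) := fun k => by positivity
  calc ∑' k : ℕ, 1 / (x (n + k + 1) ^ 2 - x n ^ 2)
      ≤ ∑' k : ℕ, D * (1 / (((k : ℝ) + 1) * (n + k + 1))) :=
        tsum_le_tsum_of_summable_of_nonneg (fun k => hD (n, k) hn)
          ((summable_of_sum_range_le hg0 (sum_range_one_div_mul_le hn)).mul_left D)
          fun k => mul_nonneg hD0 (hg0 k)
    _ = D * ∑' k : ℕ, 1 / (((k : ℝ) + 1) * (n + k + 1)) := tsum_mul_left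
    _ ≤ D * (3 * log (n + 1) / n) := by
        gcongr
        exact Real.tsum_le_of_sum_range_le hg0 (sum_range_one_div_mul_le hn)
    _ = 3 * D * log (n + 1) / n := by ring

/-- For a strictly increasing sequence of positive reals satisfying
MacMahon-type asymptotics `|x_n − πn − c| ≤ C₀/n`, there is a constant `C` such that
for every `n ≥ 1`, `∑_{m > n} 1/(x_m² − x_n²) ≤ C log(n+1)/n`.  (The sum over `m > n`
is written as a sum over `k : ℕ` with `m = n + k + 1`.) -/
theorem macmahon_inverse_gap_sum (c C₀ : ℝ) (hC₀ : 0 ≤ C₀) (x : ℕ → ℝ)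
    (hpos : ∀ n : ℕ, 1 ≤ n → 0 < x n)
    (hmono : ∀ m n : ℕ, 1 ≤ m → m < n → x m < x n)
    (hmac : ∀ n : ℕ, 1 ≤ n → |x n - π * (n : ℝ) - c| ≤ C₀ / (n : ℝ)) :
    ∃ C : ℝ, 0 ≤ C ∧
      ∀ n : ℕ, 1 ≤ n →
        (∑' k : ℕ, 1 / ((x (n + k + 1)) ^ 2 - (x n) ^ 2))
          ≤ C * Real.log ((n : ℝ) + 1) / (n : ℝ) :=
  macmahon_inverse_gap_sum_general c C₀ x hmac
end

section
/- For all u > 0 and all θ > 0: sup_{s ∈ (0,u]} √(u/s) · exp( −(θ²/2)·(1/s − 1/u) ) ≤ max( √u/θ, 1 ). -/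
open Real Set

/-!
With `t = 1/s - 1/u ≥ 0` one has `u/s = 1 + u t`, so after squaring the claim becomes
`1 + u t ≤ M² exp(θ² t)` for `M = max (√u/θ) 1`. This follows from `exp x ≥ 1 + x`, since
`M² ≥ 1` and `M² θ² ≥ u`.
-/

lemma one_add_mul_le_mul_exp {a b M t : ℝ} (hM : 1 ≤ M) (hab : a ≤ M * b) (ht : 0 ≤ t) :
    1 + a * t ≤ M * exp (b * t) :=
  calc 1 + a * t ≤ M * (1 + b * t) := by nlinarith
    _ ≤ M * exp (b * t) := by
      gcongr
      linarith [add_one_le_exp (b * t)]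

/-- For all `u > 0` and `θ > 0`,
`√(u/s) exp(−(θ²/2)(1/s − 1/u)) ≤ max(√u/θ, 1)` for every `s ∈ (0, u]`. -/
theorem sqrt_exp_ratio_sup_bound (u θ : ℝ) (hu : 0 < u) (hθ : 0 < θ) :
    ∀ s ∈ Ioc (0 : ℝ) u,
      Real.sqrt (u / s) * Real.exp (-(θ ^ 2 / 2) * (1 / s - 1 / u))
        ≤ max (Real.sqrt u / θ) 1 := by
  rintro s ⟨hs, hsu⟩
  set t := 1 / s - 1 / u
  set M := max (√u / θ) 1
  have ht : 0 ≤ t := sub_nonneg.mpr (one_div_le_one_div_of_le hs hsu)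
  have hus : u / s = 1 + u * t := by simp only [t]; field_simp; ring
  have hM : 1 ≤ M := le_max_right _ _
  have hu_le : u ≤ M ^ 2 * θ ^ 2 := by
    have : √u ≤ M * θ := (div_le_iff₀ hθ).mp (le_max_left _ _)
    calc u = √u ^ 2 := (sq_sqrt hu.le).symm
      _ ≤ M ^ 2 * θ ^ 2 := by rw [← mul_pow]; gcongr
  have hsq : u / s ≤ (M * exp (θ ^ 2 / 2 * t)) ^ 2 := by
    rw [hus, mul_pow, ← exp_nat_mul]
    convert one_add_mul_le_mul_exp (by nlinarith) hu_le ht using 3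
    ring
  calc √(u / s) * exp (-(θ ^ 2 / 2) * t)
      ≤ M * exp (θ ^ 2 / 2 * t) * exp (-(θ ^ 2 / 2) * t) := by
        gcongr
        exact sqrt_le_iff.mpr ⟨by positivity, hsq⟩
    _ = M := by rw [mul_assoc, ← exp_add]; simp
end

section
/- For every κ ≥ 0, the integral ∫_0^∞ (1 − √(1+w) · e^{−κw}) / ( w^{3/2} √(1+w) ) dw converges absolutely and equals 2√(πκ) − 2. In particular, for a > 0, b > 0 and x ∈ [0,a], taking κ = b(a−x)²/(2a): √(a/(2πb)) · ∫_0^∞ (1 − √(1+w) e^{−b w (a−x)²/(2a)}) / ( w^{3/2} √(1+w) ) dw = (a − x) − √(2a/(πb)). -/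
/-!
Split the integrand as `((1 + w)^{-1/2} - 1) w^{-3/2} + (1 - e^{-κw}) w^{-3/2}`.
The first piece has the explicit primitive `-2√w / (1 + √(1 + w))`, which vanishes at `0` and
tends to `-2` at infinity. Integrating the second piece by parts against `-2 w^{-1/2}` (the
boundary terms vanish) leaves `2κ ∫ w^{-1/2} e^{-κw} dw = 2κ Γ(1/2) κ^{-1/2} = 2√(πκ)`.
The second claim is the first at `κ = b(a - x)² / (2a)`.
-/

open Real Set MeasureTheory Filter Topology

lemma rpow_three_halves {w : ℝ} (hw : 0 ≤ w) : w ^ (3 / 2 : ℝ) = w * √w := by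
  rw [show (3 / 2 : ℝ) = 1 + 1 / 2 by norm_num, rpow_add' hw (by norm_num), rpow_one,
    sqrt_eq_rpow]

lemma rpow_one_half_sub_one {w : ℝ} (hw : 0 ≤ w) : w ^ (1 / 2 - 1 : ℝ) = (√w)⁻¹ := by
  rw [show (1 / 2 - 1 : ℝ) = -(1 / 2) by norm_num, rpow_neg hw, sqrt_eq_rpow]

lemma integrableOn_Ioi_zero_of_norm_le_rpow {E : Type*} [NormedAddCommGroup E] {f : ℝ → E}
    (hf : ContinuousOn f (Ioi 0)) {s t C D : ℝ} (hs : -1 < s) (ht : t < -1)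
    (h₀ : ∀ w ∈ Ioc 0 1, ‖f w‖ ≤ C * w ^ s)
    (h₁ : ∀ w ∈ Ioi 1, ‖f w‖ ≤ D * w ^ t) :
    IntegrableOn f (Ioi 0) := by
  rw [← Ioc_union_Ioi_eq_Ioi zero_le_one, integrableOn_union]
  exact ⟨((intervalIntegral.intervalIntegrable_rpow' hs).1.const_mul C).mono'
      ((hf.mono Ioc_subset_Ioi_self).aestronglyMeasurable measurableSet_Ioc)
      (ae_restrict_of_forall_mem measurableSet_Ioc h₀),
    ((integrableOn_Ioi_rpow_of_lt ht one_pos).const_mul D).mono'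
      ((hf.mono (Ioi_subset_Ioi zero_le_one)).aestronglyMeasurable measurableSet_Ioi)
      (ae_restrict_of_forall_mem measurableSet_Ioi h₁)⟩

lemma integrableOn_rpow_mul_exp_neg_mul {s κ : ℝ} (hs : -1 < s) (hκ : 0 < κ) :
    IntegrableOn (fun w => w ^ s * exp (-(κ * w))) (Ioi 0) := by
  simpa [rpow_one] using integrableOn_rpow_mul_exp_neg_mul_rpow hs one_pos hκ

lemma continuous_neg_two_mul_sqrt_div_one_add_sqrt_one_add :
    Continuous (fun w => -2 * √w / (1 + √(1 + w))) := by
  fun_prop (disch := intro w; positivity)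

lemma hasDerivAt_neg_two_mul_sqrt_div_one_add_sqrt_one_add {w : ℝ} (hw : 0 < w) :
    HasDerivAt (fun w => -2 * √w / (1 + √(1 + w)))
      (((√(1 + w))⁻¹ - 1) / w ^ (3 / 2 : ℝ)) w := by
  have hs := hasDerivAt_sqrt hw.ne'
  have ht : HasDerivAt (fun w => 1 + √(1 + w)) (1 / (2 * √(1 + w))) w := by
    simpa using ((hasDerivAt_sqrt (by positivity : 1 + w ≠ 0)).comp w
      ((hasDerivAt_id w).const_add 1)).const_add 1
  have hden : 1 + √(1 + w) ≠ 0 := by positivity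
  refine ((hs.const_mul (-2)).div ht hden).congr_deriv ?_
  have hs0 : 0 < √w := sqrt_pos.2 hw
  have ht0 : 0 < √(1 + w) := sqrt_pos.2 (by linarith)
  have hs2 := sq_sqrt hw.le
  have ht2 := sq_sqrt (by linarith : 0 ≤ 1 + w)
  rw [rpow_three_halves hw.le]
  field_simp
  linear_combination (√(1 + w) + 1 - w) * ht2 + w * hs2

lemma tendsto_neg_two_mul_sqrt_div_one_add_sqrt_one_add :
    Tendsto (fun w => -2 * √w / (1 + √(1 + w))) atTop (𝓝 (-2)) := by
  have h : Tendsto (fun w : ℝ => -2 / ((√w)⁻¹ + √(w⁻¹ + 1))) atTop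
      (𝓝 (-2 / (0 + √(0 + 1)))) :=
    tendsto_const_nhds.div (tendsto_sqrt_atTop.inv_tendsto_atTop.add
      ((continuous_sqrt.tendsto _).comp (tendsto_inv_atTop_zero.add_const 1))) (by norm_num)
  rw [zero_add, zero_add, sqrt_one, div_one] at h
  refine h.congr' ?_
  filter_upwards [eventually_gt_atTop 0] with w hw
  rw [show w⁻¹ + 1 = (1 + w) / w by field_simp, sqrt_div (by linarith)]
  have := sqrt_pos.2 hw
  field_simp

lemma inv_sqrt_one_add_sub_one_div_rpow_nonpos {w : ℝ} (hw : 0 < w) :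
    ((√(1 + w))⁻¹ - 1) / w ^ (3 / 2 : ℝ) ≤ 0 :=
  div_nonpos_of_nonpos_of_nonneg
    (sub_nonpos.2 (inv_le_one_of_one_le₀ (one_le_sqrt.2 (by linarith)))) (by positivity)

lemma integrableOn_inv_sqrt_one_add_sub_one_div_rpow :
    IntegrableOn (fun w => ((√(1 + w))⁻¹ - 1) / w ^ (3 / 2 : ℝ)) (Ioi 0) :=
  integrableOn_Ioi_deriv_of_nonpos
    continuous_neg_two_mul_sqrt_div_one_add_sqrt_one_add.continuousWithinAt
    (fun _ hw => hasDerivAt_neg_two_mul_sqrt_div_one_add_sqrt_one_add hw)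
    (fun _ hw => inv_sqrt_one_add_sub_one_div_rpow_nonpos hw)
    tendsto_neg_two_mul_sqrt_div_one_add_sqrt_one_add

lemma integral_inv_sqrt_one_add_sub_one_div_rpow :
    ∫ w in Ioi 0, ((√(1 + w))⁻¹ - 1) / w ^ (3 / 2 : ℝ) = -2 := by
  rw [integral_Ioi_of_hasDerivAt_of_nonpos
    continuous_neg_two_mul_sqrt_div_one_add_sqrt_one_add.continuousWithinAt
    (fun _ hw => hasDerivAt_neg_two_mul_sqrt_div_one_add_sqrt_one_add hw)
    (fun _ hw => inv_sqrt_one_add_sub_one_div_rpow_nonpos hw)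
    tendsto_neg_two_mul_sqrt_div_one_add_sqrt_one_add]
  simp

lemma one_sub_exp_neg_nonneg {x : ℝ} (hx : 0 ≤ x) : 0 ≤ 1 - exp (-x) :=
  sub_nonneg.2 (exp_le_one_iff.2 (neg_nonpos.2 hx))

lemma one_sub_exp_neg_le_min (x : ℝ) : 1 - exp (-x) ≤ min 1 x :=
  le_min (by linarith [exp_pos (-x)]) (by linarith [one_sub_le_exp_neg x])

lemma continuousOn_one_sub_exp_neg_mul_div_rpow (κ : ℝ) :
    ContinuousOn (fun w => (1 - exp (-(κ * w))) / w ^ (3 / 2 : ℝ)) (Ioi 0) :=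
  ContinuousOn.div (by fun_prop)
    (continuous_id.rpow_const fun _ => Or.inr (by norm_num)).continuousOn
    fun w hw => (rpow_pos_of_pos hw _).ne'

lemma integrableOn_one_sub_exp_neg_mul_div_rpow {κ : ℝ} (hκ : 0 ≤ κ) :
    IntegrableOn (fun w => (1 - exp (-(κ * w))) / w ^ (3 / 2 : ℝ)) (Ioi 0) := by
  refine integrableOn_Ioi_zero_of_norm_le_rpow (continuousOn_one_sub_exp_neg_mul_div_rpow κ)
    (s := 1 / 2 - 1) (t := -(3 / 2)) (C := κ) (D := 1) (by norm_num) (by norm_num)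
    (fun w hw => ?_) (fun w hw => ?_)
  · have hw0 : 0 < w := hw.1
    have hnum := one_sub_exp_neg_nonneg (mul_nonneg hκ hw0.le)
    have hle : 1 - exp (-(κ * w)) ≤ κ * w := (one_sub_exp_neg_le_min _).trans (min_le_right _ _)
    have hs := sqrt_pos.2 hw0
    rw [norm_of_nonneg (div_nonneg hnum (rpow_nonneg hw0.le _)), rpow_one_half_sub_one hw0.le,
      rpow_three_halves hw0.le, div_le_iff₀ (by positivity)]
    calc 1 - exp (-(κ * w)) ≤ κ * w := hle
      _ = κ * (√w)⁻¹ * (w * √w) := by field_simp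
  · have hw0 : 0 < w := zero_lt_one.trans hw
    have hnum := one_sub_exp_neg_nonneg (mul_nonneg hκ hw0.le)
    have hle : 1 - exp (-(κ * w)) ≤ 1 := (one_sub_exp_neg_le_min _).trans (min_le_left _ _)
    rw [norm_of_nonneg (div_nonneg hnum (rpow_nonneg hw0.le _)), rpow_neg hw0.le, one_mul,
      ← one_div]
    exact div_le_div_of_nonneg_right hle (rpow_nonneg hw0.le _)

lemma norm_one_sub_exp_neg_mul_div_sqrt_le {κ w : ℝ} (hκ : 0 ≤ κ) (hw : 0 ≤ w) :
    ‖(1 - exp (-(κ * w))) / √w‖ ≤ min 1 (κ * w) / √w := by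
  rw [norm_of_nonneg (div_nonneg (one_sub_exp_neg_nonneg (mul_nonneg hκ hw)) (sqrt_nonneg _))]
  exact div_le_div_of_nonneg_right (one_sub_exp_neg_le_min _) (sqrt_nonneg _)

lemma tendsto_one_sub_exp_neg_mul_div_sqrt_nhdsGE_zero {κ : ℝ} (hκ : 0 ≤ κ) :
    Tendsto (fun w => (1 - exp (-(κ * w))) / √w) (𝓝[≥] 0) (𝓝 0) := by
  have hlim : Tendsto (fun w => κ * √w) (𝓝[≥] 0) (𝓝 0) :=
    ((continuous_const.mul continuous_sqrt).tendsto' 0 0 (by simp)).mono_left nhdsWithin_le_nhds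
  refine squeeze_zero_norm' ?_ hlim
  filter_upwards [self_mem_nhdsWithin] with w (hw : 0 ≤ w)
  calc _ ≤ min 1 (κ * w) / √w := norm_one_sub_exp_neg_mul_div_sqrt_le hκ hw
    _ ≤ κ * w / √w := div_le_div_of_nonneg_right (min_le_right _ _) (sqrt_nonneg _)
    _ = κ * √w := by rw [mul_div_assoc, div_sqrt]

lemma tendsto_one_sub_exp_neg_mul_div_sqrt_atTop {κ : ℝ} (hκ : 0 ≤ κ) :
    Tendsto (fun w => (1 - exp (-(κ * w))) / √w) atTop (𝓝 0) := by
  refine squeeze_zero_norm' ?_ tendsto_sqrt_atTop.inv_tendsto_atTop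
  filter_upwards [eventually_ge_atTop 0] with w hw
  calc _ ≤ min 1 (κ * w) / √w := norm_one_sub_exp_neg_mul_div_sqrt_le hκ hw
    _ ≤ 1 / √w := div_le_div_of_nonneg_right (min_le_left _ _) (sqrt_nonneg _)
    _ = (√w)⁻¹ := one_div _

lemma hasDerivAt_neg_two_mul_one_sub_exp_neg_mul_div_sqrt (κ : ℝ) {w : ℝ} (hw : 0 < w) :
    HasDerivAt (fun w => -2 * ((1 - exp (-(κ * w))) / √w))
      ((1 - exp (-(κ * w))) / w ^ (3 / 2 : ℝ) -
        2 * κ * (w ^ (1 / 2 - 1 : ℝ) * exp (-(κ * w)))) w := by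
  have he : HasDerivAt (fun w => 1 - exp (-(κ * w))) (exp (-(κ * w)) * κ) w := by
    simpa using (((hasDerivAt_id w).const_mul κ).neg.exp).const_sub 1
  refine ((he.div (hasDerivAt_sqrt hw.ne') (sqrt_pos.2 hw).ne').const_mul (-2)).congr_deriv ?_
  have hs := sqrt_pos.2 hw
  rw [rpow_three_halves hw.le, rpow_one_half_sub_one hw.le]
  field_simp
  rw [sq_sqrt hw.le]
  ring

lemma integral_one_sub_exp_neg_mul_div_rpow {κ : ℝ} (hκ : 0 ≤ κ) :
    ∫ w in Ioi 0, (1 - exp (-(κ * w))) / w ^ (3 / 2 : ℝ) = 2 * √(π * κ) := by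
  rcases hκ.eq_or_lt with rfl | hκ
  · simp
  have hE := (integrableOn_rpow_mul_exp_neg_mul (s := 1 / 2 - 1) (by norm_num) hκ).const_mul
    (2 * κ)
  have hh := integrableOn_one_sub_exp_neg_mul_div_rpow hκ.le
  have hcont : ContinuousWithinAt (fun w => -2 * ((1 - exp (-(κ * w))) / √w)) (Ici 0) 0 := by
    simpa [ContinuousWithinAt] using
      (tendsto_one_sub_exp_neg_mul_div_sqrt_nhdsGE_zero hκ.le).const_mul (-2)
  have hFTC := integral_Ioi_of_hasDerivAt_of_tendsto hcont
    (fun _ hw => hasDerivAt_neg_two_mul_one_sub_exp_neg_mul_div_sqrt κ hw) (hh.sub hE)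
    (by simpa using (tendsto_one_sub_exp_neg_mul_div_sqrt_atTop hκ.le).const_mul (-2))
  rw [integral_sub hh hE, integral_const_mul, integral_rpow_mul_exp_neg_mul_Ioi one_half_pos hκ,
    Gamma_one_half_eq, ← sqrt_eq_rpow, one_div, sqrt_inv] at hFTC
  have hs := sqrt_pos.2 hκ
  simp only [mul_zero, neg_zero, exp_zero, sub_self, zero_div, sub_eq_zero] at hFTC
  rw [hFTC, sqrt_mul pi_pos.le]
  field_simp
  rw [sq_sqrt hκ.le]

lemma one_sub_sqrt_mul_exp_div_eq {κ w : ℝ} (hw : 0 < w) :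
    (1 - √(1 + w) * exp (-(κ * w))) / (w ^ (3 / 2 : ℝ) * √(1 + w)) =
      ((√(1 + w))⁻¹ - 1) / w ^ (3 / 2 : ℝ) + (1 - exp (-(κ * w))) / w ^ (3 / 2 : ℝ) := by
  have := rpow_pos_of_pos hw (3 / 2)
  have := sqrt_pos.2 (by linarith : 0 < 1 + w)
  field_simp
  ring

lemma integrableOn_one_sub_sqrt_mul_exp_div {κ : ℝ} (hκ : 0 ≤ κ) :
    IntegrableOn (fun w => (1 - √(1 + w) * exp (-(κ * w))) / (w ^ (3 / 2 : ℝ) * √(1 + w)))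
      (Ioi 0) :=
  (integrableOn_inv_sqrt_one_add_sub_one_div_rpow.add
    (integrableOn_one_sub_exp_neg_mul_div_rpow hκ)).congr_fun
    (fun _ hw => (one_sub_sqrt_mul_exp_div_eq hw).symm) measurableSet_Ioi

lemma integral_one_sub_sqrt_mul_exp_div {κ : ℝ} (hκ : 0 ≤ κ) :
    ∫ w in Ioi 0, (1 - √(1 + w) * exp (-(κ * w))) / (w ^ (3 / 2 : ℝ) * √(1 + w)) =
      2 * √(π * κ) - 2 := by
  rw [setIntegral_congr_fun measurableSet_Ioi fun _ hw => one_sub_sqrt_mul_exp_div_eq hw,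
    integral_add integrableOn_inv_sqrt_one_add_sub_one_div_rpow
      (integrableOn_one_sub_exp_neg_mul_div_rpow hκ),
    integral_inv_sqrt_one_add_sub_one_div_rpow, integral_one_sub_exp_neg_mul_div_rpow hκ]
  ring

/-- The integral `∫_0^∞ (1 − √(1+w) e^{−κw})/(w^{3/2} √(1+w)) dw`
converges absolutely for every `κ ≥ 0` and equals `2√(πκ) − 2`.  In particular,
for `a, b > 0` and `x ∈ [0,a]`, with `κ = b(a−x)²/(2a)`,
`√(a/(2πb)) ∫_0^∞ (1 − √(1+w) e^{−bw(a−x)²/(2a)})/(w^{3/2} √(1+w)) dw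
  = (a−x) − √(2a/(πb))`. -/
theorem integral_one_sub_sqrt_exp :
    (∀ κ : ℝ, 0 ≤ κ →
      IntegrableOn
        (fun w : ℝ => (1 - Real.sqrt (1 + w) * Real.exp (-(κ * w)))
            / (w ^ ((3 : ℝ) / 2) * Real.sqrt (1 + w))) (Ioi 0) ∧
      (∫ w in Ioi (0 : ℝ), (1 - Real.sqrt (1 + w) * Real.exp (-(κ * w)))
            / (w ^ ((3 : ℝ) / 2) * Real.sqrt (1 + w)))
        = 2 * Real.sqrt (π * κ) - 2) ∧
    (∀ a b x : ℝ, 0 < a → 0 < b → x ∈ Icc 0 a →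
      Real.sqrt (a / (2 * π * b)) *
          (∫ w in Ioi (0 : ℝ),
            (1 - Real.sqrt (1 + w) * Real.exp (-(b * w * (a - x) ^ 2 / (2 * a))))
              / (w ^ ((3 : ℝ) / 2) * Real.sqrt (1 + w)))
        = (a - x) - Real.sqrt (2 * a / (π * b))) := by
  refine ⟨fun κ hκ => ⟨integrableOn_one_sub_sqrt_mul_exp_div hκ,
    integral_one_sub_sqrt_mul_exp_div hκ⟩, fun a b x ha hb ⟨_, hxa⟩ => ?_⟩
  have hκw : ∀ w, b * w * (a - x) ^ 2 / (2 * a) = b * (a - x) ^ 2 / (2 * a) * w :=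
    fun w => by ring
  simp_rw [hκw]
  rw [integral_one_sub_sqrt_mul_exp_div (by positivity)]
  have hmain : √(a / (2 * π * b)) * √(π * (b * (a - x) ^ 2 / (2 * a))) = (a - x) / 2 := by
    rw [← sqrt_mul (by positivity), ← sqrt_sq (by linarith : 0 ≤ (a - x) / 2)]
    congr 1
    field_simp
  have hconst : 2 * √(a / (2 * π * b)) = √(2 * a / (π * b)) := by
    rw [← sqrt_sq (zero_le_two : (0:ℝ) ≤ 2), ← sqrt_mul (by norm_num)]
    congr 1
    field_simp
    ring
  linear_combination 2 * hmain - hconst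
end

section
/- Let 0 < b₀ ≤ b₁ < ∞. There exists a constant C < ∞, depending only on b₀ and b₁, such that for all a ≥ 1, all b ∈ [b₀, b₁] and all x ∈ [0,a]: √a · ∫_0^∞ e^{−b w (a−x)²/(2a)} · w^{−3/2} · min(w,1)/max(bx,1) dw ≤ C · max(a−x, 1)/√a. -/
/-!
Since the exponential factor is at most `1`, the integral is at most
`(∫₀^∞ w^{-3/2} min(w,1) dw) / max(bx,1) = 4 / max(bx,1)`. It remains to see that
`a ≲ max(a-x,1) · max(bx,1)`: if `x ≤ a/2` the first factor is at least `a/2`, otherwise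
the second is at least `b₀ a / 2`.
-/

open Real Set MeasureTheory

lemma rpow_mul_min_one_eqOn_Ioc (s : ℝ) :
    EqOn (fun w : ℝ => w ^ s * min w 1) (fun w => w ^ (s + 1)) (Ioc 0 1) := by
  intro w ⟨hw₀, hw₁⟩
  simp only [min_eq_left hw₁, rpow_add_one hw₀.ne']

lemma rpow_mul_min_one_eqOn_Ioi (s : ℝ) :
    EqOn (fun w : ℝ => w ^ s * min w 1) (fun w => w ^ s) (Ioi 1) := by
  intro w (hw : 1 < w)
  simp only [min_eq_right hw.le, mul_one]

lemma integrableOn_Ioc_rpow_mul_min_one {s : ℝ} (hs : -2 < s) :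
    IntegrableOn (fun w : ℝ => w ^ s * min w 1) (Ioc 0 1) := by
  refine IntegrableOn.congr_fun ?_ (rpow_mul_min_one_eqOn_Ioc s).symm measurableSet_Ioc
  exact (intervalIntegrable_iff_integrableOn_Ioc_of_le zero_le_one).1
    (intervalIntegral.intervalIntegrable_rpow' (by linarith))

lemma integrableOn_Ioi_one_rpow_mul_min_one {s : ℝ} (hs : s < -1) :
    IntegrableOn (fun w : ℝ => w ^ s * min w 1) (Ioi 1) :=
  (integrableOn_Ioi_rpow_of_lt hs one_pos).congr_fun
    (rpow_mul_min_one_eqOn_Ioi s).symm measurableSet_Ioi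

lemma integrableOn_Ioi_rpow_mul_min_one {s : ℝ} (hs₂ : -2 < s) (hs₁ : s < -1) :
    IntegrableOn (fun w : ℝ => w ^ s * min w 1) (Ioi 0) := by
  rw [← Ioc_union_Ioi_eq_Ioi zero_le_one]
  exact (integrableOn_Ioc_rpow_mul_min_one hs₂).union
    (integrableOn_Ioi_one_rpow_mul_min_one hs₁)

lemma integral_Ioi_rpow_mul_min_one {s : ℝ} (hs₂ : -2 < s) (hs₁ : s < -1) :
    ∫ w in Ioi (0 : ℝ), w ^ s * min w 1 = -1 / ((s + 1) * (s + 2)) := by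
  have h_near_zero : ∫ w in Ioc (0 : ℝ) 1, w ^ s * min w 1 = 1 / (s + 2) := by
    rw [setIntegral_congr_fun measurableSet_Ioc (rpow_mul_min_one_eqOn_Ioc s),
      ← intervalIntegral.integral_of_le zero_le_one, integral_rpow (Or.inl (by linarith)),
      zero_rpow (by linarith), one_rpow]
    ring_nf
  have h_near_infty : ∫ w in Ioi (1 : ℝ), w ^ s * min w 1 = -1 / (s + 1) := by
    rw [setIntegral_congr_fun measurableSet_Ioi (rpow_mul_min_one_eqOn_Ioi s),
      integral_Ioi_rpow_of_lt hs₁ one_pos, one_rpow]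
  rw [← Ioc_union_Ioi_eq_Ioi zero_le_one,
    setIntegral_union Ioc_disjoint_Ioi_same measurableSet_Ioi
      (integrableOn_Ioc_rpow_mul_min_one hs₂) (integrableOn_Ioi_one_rpow_mul_min_one hs₁),
    h_near_zero, h_near_infty]
  have : s + 1 ≠ 0 := by linarith
  have : s + 2 ≠ 0 := by linarith
  field_simp
  ring

lemma le_two_mul_max_mul_max {a b b₀ x : ℝ} (hb₀ : 0 < b₀) (hb : b₀ ≤ b)
    (hx : 0 ≤ x) :
    a ≤ 2 * max 1 b₀⁻¹ * (max (a - x) 1 * max (b * x) 1) := by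
  have hK : 1 ≤ max 1 b₀⁻¹ := le_max_left _ _
  have hN : 1 ≤ max (a - x) 1 := le_max_right _ _
  have hM : 1 ≤ max (b * x) 1 := le_max_right _ _
  rcases le_or_gt x (a / 2) with hx_small | hx_large
  · calc a ≤ 2 * 1 * (max (a - x) 1 * 1) := by linarith [le_max_left (a - x) 1]
      _ ≤ _ := by gcongr
  · have hbx : b₀ * x ≤ max (b * x) 1 :=
      (mul_le_mul_of_nonneg_right hb hx).trans (le_max_left _ _)
    have hMN : max (b * x) 1 ≤ max (a - x) 1 * max (b * x) 1 :=
      le_mul_of_one_le_left (by linarith) hN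
    calc a ≤ 2 * b₀⁻¹ * (b₀ * x) := by field_simp; linarith
      _ ≤ _ := mul_le_mul (by gcongr; exact le_max_right _ _) (hbx.trans hMN)
        (by positivity) (by positivity)

lemma setIntegral_Ioi_mul_rpow_mul_min_div_le {e : ℝ → ℝ} {M : ℝ} (hM : 0 ≤ M)
    (he₀ : ∀ w, 0 < w → 0 ≤ e w) (he₁ : ∀ w, 0 < w → e w ≤ 1) :
    ∫ w in Ioi (0 : ℝ), e w * w ^ (-(3 : ℝ) / 2) * (min w 1 / M) ≤ 4 / M := by
  have h_four : ∫ w in Ioi (0 : ℝ), w ^ (-(3 : ℝ) / 2) * min w 1 = 4 := by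
    rw [integral_Ioi_rpow_mul_min_one (by norm_num) (by norm_num)]
    norm_num
  rw [← h_four, ← integral_div]
  refine setIntegral_mono_of_nonneg (fun w (hw : 0 < w) => ?_) (fun w (hw : 0 < w) => ?_)
    ((integrableOn_Ioi_rpow_mul_min_one (by norm_num) (by norm_num)).div_const _)
  · have := he₀ w hw
    positivity
  · calc _ ≤ 1 * w ^ (-(3 : ℝ) / 2) * (min w 1 / M) := by gcongr; exact he₁ w hw
      _ = _ := by ring

theorem integral_remainder_bound_general (b₀ b₁ : ℝ) (hb₀ : 0 < b₀) :
    ∃ C : ℝ, 0 ≤ C ∧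
      ∀ a : ℝ, 1 ≤ a → ∀ b ∈ Icc b₀ b₁, ∀ x ∈ Icc (0 : ℝ) a,
        Real.sqrt a *
            (∫ w in Ioi (0 : ℝ),
              Real.exp (-(b * w * (a - x) ^ 2 / (2 * a))) * w ^ (-(3 : ℝ) / 2) *
                (min w 1 / max (b * x) 1))
          ≤ C * max (a - x) 1 / Real.sqrt a := by
  refine ⟨8 * max 1 b₀⁻¹, by positivity, fun a ha b hb x hx => ?_⟩
  have hb_pos : 0 < b := hb₀.trans_le hb.1
  have ha_pos : 0 < a := one_pos.trans_le ha
  have hM : 0 < max (b * x) 1 := one_pos.trans_le (le_max_right _ _)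
  have h_integral := setIntegral_Ioi_mul_rpow_mul_min_div_le hM.le
    (fun w _ => (exp_pos (-(b * w * (a - x) ^ 2 / (2 * a)))).le)
    (fun w hw => exp_le_one_iff.2 (neg_nonpos.2 (by positivity)))
  rw [le_div_iff₀ (sqrt_pos.2 ha_pos)]
  calc _ ≤ Real.sqrt a * (4 / max (b * x) 1) * Real.sqrt a := by gcongr
    _ = 4 * a / max (b * x) 1 := by
      linear_combination 4 / max (b * x) 1 * mul_self_sqrt ha_pos.le
    _ ≤ _ := by
      rw [div_le_iff₀ hM]
      linarith [le_two_mul_max_mul_max (a := a) (x := x) hb₀ hb.1 hx.1]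

/-- Integral bound controlling the contribution of the Bessel
remainder: there is `C < ∞` (depending only on `b₀, b₁`) such that for all `a ≥ 1`,
`b ∈ [b₀, b₁]` and `x ∈ [0,a]`,
`√a ∫_0^∞ e^{−bw(a−x)²/(2a)} w^{−3/2} min(w,1)/max(bx,1) dw ≤ C max(a−x,1)/√a`. -/
theorem integral_remainder_bound (b₀ b₁ : ℝ) (hb₀ : 0 < b₀) (hb : b₀ ≤ b₁) :
    ∃ C : ℝ, 0 ≤ C ∧
      ∀ a : ℝ, 1 ≤ a → ∀ b ∈ Icc b₀ b₁, ∀ x ∈ Icc (0 : ℝ) a,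
        Real.sqrt a *
            (∫ w in Ioi (0 : ℝ),
              Real.exp (-(b * w * (a - x) ^ 2 / (2 * a))) * w ^ (-(3 : ℝ) / 2) *
                (min w 1 / max (b * x) 1))
          ≤ C * max (a - x) 1 / Real.sqrt a :=
  integral_remainder_bound_general b₀ b₁ hb₀
end
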